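/- arXiv:1112.5753 — 7 statements merged into one kernel-verified Lean document; each statement's English description precedes it below -/
import Mathlib

section
/- The elasticity of Int(ℤ) is infinite: for every real number M there exists a nonzero nonunit f ∈ Int(ℤ) and natural numbers m, n in the set of lengths L(f) with m / n > M. -/
open Polynomial

noncomputable def IntValued : Subring (Polynomial ℚ) where
  carrier := {f | ∀ c : ℤ, ∃ m : ℤ, f.eval (c : ℚ) = (m : ℚ)}
  zero_mem' := fun c => ⟨0, by simp⟩
  one_mem' := fun c => ⟨1, by simp⟩
  add_mem' := by
    rintro f g hf hg c
    obtain ⟨m, hm⟩ := hf c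
    obtain ⟨n, hn⟩ := hg c
    exact ⟨m + n, by simp [hm, hn]⟩
  mul_mem' := by
    rintro f g hf hg c
    obtain ⟨m, hm⟩ := hf c
    obtain ⟨n, hn⟩ := hg c
    exact ⟨m * n, by simp [hm, hn]⟩
  neg_mem' := by
    rintro f hf c
    obtain ⟨m, hm⟩ := hf c
    exact ⟨-m, by simp [hm]⟩

/-!
Fix a prime `p`, let `K = (p - 1)!` and `F = ∏_{i < p} (X - i K)`. The roots `i K` form a complete
residue system mod `p`, so `g = F / p ∈ Int(ℤ)`, and `F = p · g = ∏_{i < p} (X - i K)` has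
factorizations of lengths `2` and `p` into irreducibles; let `p → ∞`.

The linear factors and `p` are clearly irreducible. If `g = u v`, then over `ℚ` the roots of `F`
are shared out between `u` and `v`. If both receive a root, then `p · u(t) · v(s)`, for a root `t`
of `v` and a root `s` of `u`, is a product of differences of distinct roots, which `p` does not
divide. If one factor is an integer constant `n`, then `p n` divides every value of `F`, hence its
`p`-th finite difference `p!`; so `n ∣ K`, while `F(1) ≡ 1 mod K`.
-/

open scoped Nat

theorem Polynomial.dvd_leadingCoeff_mul_factorial {R : Type*} [CommRing R] (f : R[X]) {d : R}
    (h : ∀ k : ℕ, d ∣ f.eval (k : R)) : d ∣ f.leadingCoeff * f.natDegree ! := by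
  have := congrFun f.fwdDiff_iter_degree_eq_factorial 0
  rw [fwdDiff_iter_eq_sum_shift] at this
  simp only [Pi.smul_apply, Pi.natCast_apply, smul_eq_mul, zero_add, nsmul_eq_mul, mul_one] at this
  rw [← this]
  exact Finset.dvd_sum fun k _ => by rw [zsmul_eq_mul]; exact dvd_mul_of_dvd_right (h k) _

theorem Polynomial.exists_le_eq_C_mul_prod_of_dvd {K ι : Type*} [Field K] (f : ι → K) {u : K[X]}
    (s : Multiset ι) (h : u ∣ (s.map fun i => X - C (f i)).prod) :
    ∃ t ≤ s, u = C u.leadingCoeff * (t.map fun i => X - C (f i)).prod := by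
  induction s using Multiset.induction generalizing u with
  | empty =>
    have hu : u.natDegree = 0 :=
      natDegree_eq_zero_of_isUnit (isUnit_of_dvd_one (by simpa using h))
    refine ⟨0, le_rfl, ?_⟩
    rw [Multiset.map_zero, Multiset.prod_zero, mul_one, leadingCoeff, hu]
    exact eq_C_of_natDegree_eq_zero hu
  | cons i s ih =>
    rw [Multiset.map_cons, Multiset.prod_cons] at h
    by_cases hi : X - C (f i) ∣ u
    · obtain ⟨w, rfl⟩ := hi
      obtain ⟨t, hts, hw⟩ := ih ((mul_dvd_mul_iff_left (X_sub_C_ne_zero _)).mp h)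
      refine ⟨i ::ₘ t, Multiset.cons_le_cons i hts, ?_⟩
      rw [leadingCoeff_mul, leadingCoeff_X_sub_C, one_mul, Multiset.map_cons, Multiset.prod_cons]
      nth_rewrite 1 [hw]
      ring
    · have hcop := (irreducible_X_sub_C (f i)).coprime_iff_not_dvd.mpr hi
      obtain ⟨t, hts, hu⟩ := ih (hcop.symm.dvd_of_dvd_mul_left h)
      exact ⟨t, hts.trans (Multiset.le_cons_self s i), hu⟩

noncomputable def rootPoly (R : Multiset ℤ) : ℤ[X] := (R.map fun r => X - C r).prod

section rootPoly

variable (R S T : Multiset ℤ)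

theorem rootPoly_monic : (rootPoly R).Monic :=
  monic_multiset_prod_of_monic _ _ fun r _ => monic_X_sub_C r

theorem natDegree_rootPoly : (rootPoly R).natDegree = Multiset.card R :=
  natDegree_multiset_prod_X_sub_C_eq_card R

theorem rootPoly_add : rootPoly (S + T) = rootPoly S * rootPoly T := by
  simp [rootPoly]

theorem eval_rootPoly (x : ℤ) : (rootPoly R).eval x = (R.map fun r => x - r).prod := by
  simp [rootPoly, eval_multiset_prod, Multiset.map_map]

theorem map_rootPoly :
    (rootPoly R).map (Int.castRingHom ℚ) = (R.map fun r : ℤ => X - C (r : ℚ)).prod := by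
  simp [rootPoly, Polynomial.map_multiset_prod, Multiset.map_map]

theorem exists_eq_add_of_mul_eq_C_mul_map_rootPoly {u v : ℚ[X]} {c : ℚ} (hc : c ≠ 0)
    (h : u * v = C c * (rootPoly R).map (Int.castRingHom ℚ)) :
    ∃ S T : Multiset ℤ, R = S + T ∧
      ∃ a ≠ 0, u = C a * (rootPoly S).map (Int.castRingHom ℚ) ∧
      C a * v = C c * (rootPoly T).map (Int.castRingHom ℚ) := by
  have hmonic (S : Multiset ℤ) : ((rootPoly S).map (Int.castRingHom ℚ)).Monic :=
    (rootPoly_monic S).map _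
  have hdvd : u ∣ (R.map fun r : ℤ => X - C (r : ℚ)).prod := by
    rw [← map_rootPoly, ← (isUnit_C.mpr hc.isUnit).dvd_mul_left, ← h]
    exact dvd_mul_right u v
  obtain ⟨S, hSR, hu⟩ := exists_le_eq_C_mul_prod_of_dvd (Int.cast : ℤ → ℚ) R hdvd
  obtain ⟨T, rfl⟩ := Multiset.le_iff_exists_add.mp hSR
  rw [← map_rootPoly] at hu
  have ha : u.leadingCoeff ≠ 0 := by
    intro ha
    rw [hu, ha, C_0, zero_mul, zero_mul, eq_comm] at h
    exact mul_ne_zero (C_ne_zero.mpr hc) (hmonic _).ne_zero h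
  refine ⟨S, T, rfl, u.leadingCoeff, ha, hu, mul_left_cancel₀ (hmonic S).ne_zero ?_⟩
  rw [rootPoly_add, Polynomial.map_mul, hu] at h
  linear_combination h

end rootPoly

section residues

variable {p : ℕ}

theorem dvd_eval_rootPoly (hp : p.Prime) {R : Multiset ℤ}
    (hR : (R.map (Int.cast : ℤ → ZMod p)).Nodup) (hcard : Multiset.card R = p) (x : ℤ) :
    (p : ℤ) ∣ (rootPoly R).eval x := by
  classical
  have := Fact.mk hp
  have huniv : (R.map (Int.cast : ℤ → ZMod p)).toFinset = Finset.univ :=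
    Finset.eq_univ_of_card _ <| by
      rw [Multiset.toFinset_card_of_nodup hR, Multiset.card_map, hcard, ZMod.card]
  obtain ⟨r, hr, hrx⟩ :=
    Multiset.mem_map.mp (Multiset.mem_toFinset.mp (huniv ▸ Finset.mem_univ (x : ZMod p)))
  rw [eval_rootPoly]
  refine dvd_trans ?_ (Multiset.dvd_prod (Multiset.mem_map_of_mem _ hr))
  rw [← ZMod.intCast_zmod_eq_zero_iff_dvd, Int.cast_sub, hrx, sub_self]

theorem not_dvd_eval_rootPoly (hp : p.Prime) {S T : Multiset ℤ}
    (hST : ((S + T).map (Int.cast : ℤ → ZMod p)).Nodup) {t : ℤ} (ht : t ∈ T) :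
    ¬ (p : ℤ) ∣ (rootPoly S).eval t := by
  have := Fact.mk hp
  rw [← ZMod.intCast_zmod_eq_zero_iff_dvd, eval_rootPoly, Int.cast_multiset_prod,
    Multiset.map_map]
  refine Multiset.prod_ne_zero fun h0 => ?_
  obtain ⟨s, hs, hst⟩ := Multiset.mem_map.mp h0
  rw [Multiset.map_add, Multiset.nodup_add] at hST
  refine Multiset.disjoint_left.mp hST.2.2 (Multiset.mem_map_of_mem _ hs) ?_
  rw [show ((s : ℤ) : ZMod p) = t by simpa [sub_eq_zero, eq_comm] using hst]
  exact Multiset.mem_map_of_mem _ ht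

end residues

def factorialMultiples (p : ℕ) : Multiset ℤ :=
  (Multiset.range p).map fun i : ℕ => (i : ℤ) * (p - 1)!

theorem card_factorialMultiples (p : ℕ) : Multiset.card (factorialMultiples p) = p := by
  simp [factorialMultiples]

theorem factorial_dvd_of_mem_factorialMultiples {p : ℕ} {r : ℤ}
    (hr : r ∈ factorialMultiples p) : ((p - 1)! : ℤ) ∣ r := by
  obtain ⟨i, -, rfl⟩ := Multiset.mem_map.mp hr
  exact dvd_mul_left _ _

theorem nodup_map_intCast_factorialMultiples {p : ℕ} (hp : p.Prime) :
    ((factorialMultiples p).map (Int.cast : ℤ → ZMod p)).Nodup := by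
  have := Fact.mk hp
  have hK : ((p - 1)! : ZMod p) ≠ 0 := by
    rw [Ne, ZMod.natCast_eq_zero_iff, hp.dvd_factorial]
    exact Nat.not_le.mpr (Nat.sub_lt hp.pos one_pos)
  rw [factorialMultiples, Multiset.map_map]
  refine (Multiset.nodup_range p).map_on fun i hi j hj hij => ?_
  simp only [Function.comp_apply, Int.cast_mul, Int.cast_natCast] at hij
  have := (ZMod.natCast_eq_natCast_iff' i j p).mp (mul_right_cancel₀ hK hij)
  rwa [Nat.mod_eq_of_lt (Multiset.mem_range.mp hi), Nat.mod_eq_of_lt (Multiset.mem_range.mp hj)]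
    at this

namespace IntValued

theorem map_mem (f : ℤ[X]) : f.map (Int.castRingHom ℚ) ∈ IntValued :=
  fun c => ⟨f.eval c, by simp [eval_intCast_map]⟩

noncomputable def ofIntPoly : ℤ[X] →+* IntValued :=
  (mapRingHom (Int.castRingHom ℚ)).codRestrict IntValued map_mem

theorem coe_ofIntPoly (f : ℤ[X]) : (ofIntPoly f : ℚ[X]) = f.map (Int.castRingHom ℚ) := rfl

noncomputable def ofIntPolyDiv (F : ℤ[X]) (d : ℤ) (h : ∀ x : ℤ, d ∣ F.eval x) :
    IntValued :=
  ⟨C (d : ℚ)⁻¹ * F.map (Int.castRingHom ℚ), fun x => by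
    obtain ⟨k, hk⟩ := h x
    rcases eq_or_ne d 0 with rfl | hd
    · exact ⟨0, by simp⟩
    · exact ⟨k, by simp [eval_intCast_map, hk, hd]⟩⟩

theorem coe_ofIntPolyDiv (F : ℤ[X]) (d : ℤ) (h : ∀ x : ℤ, d ∣ F.eval x) :
    (ofIntPolyDiv F d h : ℚ[X]) = C (d : ℚ)⁻¹ * F.map (Int.castRingHom ℚ) := rfl

theorem intCast_mul_ofIntPolyDiv {F : ℤ[X]} {d : ℤ} (hd : d ≠ 0)
    (h : ∀ x : ℤ, d ∣ F.eval x) : (d : IntValued) * ofIntPolyDiv F d h = ofIntPoly F := by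
  apply Subtype.ext
  rw [Subring.coe_mul, Subring.coe_intCast, coe_ofIntPolyDiv, coe_ofIntPoly, ← C_eq_intCast,
    ← mul_assoc, ← C_mul, mul_inv_cancel₀ (Int.cast_ne_zero.mpr hd), C_1, one_mul]

theorem intCast_dvd_of_eval_eq {n : ℤ} {f : IntValued} (h : (n : IntValued) ∣ f) {x m : ℤ}
    (hm : (f : ℚ[X]).eval (x : ℚ) = m) : n ∣ m := by
  obtain ⟨w, rfl⟩ := h
  obtain ⟨k, hk⟩ := w.2 x
  refine ⟨k, ?_⟩
  have : (m : ℚ) = n * k := by simp [← hm, ← hk]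
  exact_mod_cast this

theorem exists_eq_intCast_of_natDegree_eq_zero {u : IntValued}
    (h : (u : ℚ[X]).natDegree = 0) : ∃ n : ℤ, u = n := by
  obtain ⟨n, hn⟩ := u.2 0
  refine ⟨n, Subtype.ext ?_⟩
  rw [Subring.coe_intCast, ← C_eq_intCast, eq_C_of_natDegree_eq_zero h, coeff_zero_eq_eval_zero,
    ← hn, Int.cast_zero]

theorem irreducible_of_natDegree_eq_zero_or {f : IntValued} (hf : (f : ℚ[X]).natDegree ≠ 0)
    (hfactor : ∀ u v : IntValued, f = u * v →
      (u : ℚ[X]).natDegree = 0 ∨ (v : ℚ[X]).natDegree = 0)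
    (hprim : ∀ n : ℤ, (n : IntValued) ∣ f → IsUnit n) : Irreducible f := by
  have isUnit_of_dvd (u : IntValued) (hu : u ∣ f) (h0 : (u : ℚ[X]).natDegree = 0) :
      IsUnit u := by
    obtain ⟨n, rfl⟩ := exists_eq_intCast_of_natDegree_eq_zero h0
    simpa using (hprim n hu).map (Int.castRingHom IntValued)
  refine ⟨fun hu => hf (natDegree_eq_zero_of_isUnit (hu.map IntValued.subtype)),
    fun u v huv => ?_⟩
  exact (hfactor u v huv).imp (isUnit_of_dvd u (Dvd.intro v huv.symm))
    (isUnit_of_dvd v (Dvd.intro_left u huv.symm))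

theorem irreducible_intCast {p : ℤ} (hp : Irreducible p) : Irreducible (p : IntValued) := by
  refine ⟨fun hu => hp.not_isUnit (isUnit_of_dvd_one ?_), fun u v huv => ?_⟩
  · exact intCast_dvd_of_eval_eq (f := ((1 : ℤ) : IntValued)) (x := 0) hu.dvd (by simp)
  have hp0 : ((p : IntValued) : ℚ[X]) ≠ 0 := by simp [hp.ne_zero]
  have hdeg (w : IntValued) (hw : w ∣ p) : (w : ℚ[X]).natDegree = 0 :=
    Nat.le_zero.mp ((natDegree_le_of_dvd (map_dvd IntValued.subtype hw) hp0).trans (by simp))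
  obtain ⟨m, rfl⟩ := exists_eq_intCast_of_natDegree_eq_zero (hdeg u (Dvd.intro v huv.symm))
  obtain ⟨n, rfl⟩ := exists_eq_intCast_of_natDegree_eq_zero (hdeg v (Dvd.intro_left _ huv.symm))
  have hmn : p = m * n := by exact_mod_cast huv
  exact (hp.isUnit_or_isUnit hmn).imp (·.map (Int.castRingHom _)) (·.map (Int.castRingHom _))

theorem irreducible_ofIntPoly_X_sub_C (r : ℤ) : Irreducible (ofIntPoly (X - C r)) := by
  have hcoe : (ofIntPoly (X - C r) : ℚ[X]) = X - C (r : ℚ) := by simp [coe_ofIntPoly]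
  refine irreducible_of_natDegree_eq_zero_or (by rw [hcoe, natDegree_X_sub_C]; exact one_ne_zero)
    (fun u v huv => ?_) fun n hn => ?_
  · have := (irreducible_X_sub_C (r : ℚ)).isUnit_or_isUnit (hcoe ▸ congrArg Subtype.val huv)
    exact this.imp natDegree_eq_zero_of_isUnit natDegree_eq_zero_of_isUnit
  · exact isUnit_of_dvd_one (intCast_dvd_of_eval_eq hn (x := r + 1) (by rw [hcoe]; simp))

variable {p : ℕ}

theorem natDegree_eq_zero_or_of_mul_eq (hp : p.Prime) {R : Multiset ℤ}
    (hR : (R.map (Int.cast : ℤ → ZMod p)).Nodup) {u v : IntValued}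
    (h : (u : ℚ[X]) * v = C (p : ℚ)⁻¹ * (rootPoly R).map (Int.castRingHom ℚ)) :
    (u : ℚ[X]).natDegree = 0 ∨ (v : ℚ[X]).natDegree = 0 := by
  have hp0 : (p : ℚ) ≠ 0 := Nat.cast_ne_zero.mpr hp.ne_zero
  obtain ⟨S, T, rfl, a, ha, hu, hv⟩ :=
    exists_eq_add_of_mul_eq_C_mul_map_rootPoly R (inv_ne_zero hp0) h
  rcases Multiset.empty_or_exists_mem S with rfl | ⟨s, hs⟩
  · exact .inl (by simp [hu, rootPoly])
  rcases Multiset.empty_or_exists_mem T with rfl | ⟨t, ht⟩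
  · exact .inr (by simpa [natDegree_C_mul ha, rootPoly] using congrArg natDegree hv)
  obtain ⟨m₁, hm₁⟩ := u.2 t
  obtain ⟨m₂, hm₂⟩ := v.2 s
  have key : (p : ℤ) * (m₁ * m₂) = (rootPoly S).eval t * (rootPoly T).eval s := by
    have e₁ := congrArg (eval (t : ℚ)) hu
    have e₂ := congrArg (eval (s : ℚ)) hv
    simp only [eval_mul, eval_C, eval_intCast_map, eq_intCast, hm₁, hm₂] at e₁ e₂
    field_simp at e₂
    have hq : (p : ℚ) * (m₁ * m₂) = (rootPoly S).eval t * (rootPoly T).eval s := by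
      linear_combination (p * m₂) * e₁ + (((rootPoly S).eval t : ℤ) : ℚ) * e₂
    exact_mod_cast hq
  rcases (Nat.prime_iff_prime_int.mp hp).dvd_mul.mp (Dvd.intro _ key) with hS | hT
  · exact absurd hS (not_dvd_eval_rootPoly hp hR ht)
  · exact absurd hT (not_dvd_eval_rootPoly hp (add_comm S T ▸ hR) hs)

theorem isUnit_of_intCast_dvd_ofIntPolyDiv (hp : p.Prime) {R : Multiset ℤ}
    (hcard : Multiset.card R = p) (hK : ∀ r ∈ R, ((p - 1)! : ℤ) ∣ r)
    (hdvd : ∀ x : ℤ, (p : ℤ) ∣ (rootPoly R).eval x) {n : ℤ}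
    (hn : (n : IntValued) ∣ ofIntPolyDiv (rootPoly R) p hdvd) : IsUnit n := by
  have hp0 : (p : ℤ) ≠ 0 := Nat.cast_ne_zero.mpr hp.ne_zero
  have hpn (x : ℤ) : (p : ℤ) * n ∣ (rootPoly R).eval x := by
    obtain ⟨k, hk⟩ := hdvd x
    rw [hk]
    refine mul_dvd_mul_left _ (intCast_dvd_of_eval_eq hn (x := x) ?_)
    simp [coe_ofIntPolyDiv, eval_intCast_map, hk, hp.ne_zero]
  have hn_dvd : n ∣ ((p - 1)! : ℤ) := by
    have := dvd_leadingCoeff_mul_factorial (rootPoly R) fun k => hpn k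
    rw [(rootPoly_monic R).leadingCoeff, natDegree_rootPoly, hcard, one_mul,
      ← Nat.mul_factorial_pred hp.ne_zero, Nat.cast_mul] at this
    exact (mul_dvd_mul_iff_left hp0).mp this
  have hone : ((p - 1)! : ℤ) ∣ (rootPoly R).eval 1 - 1 := by
    rw [eval_rootPoly]
    refine (Int.ModEq.multisetProd_map_one fun r hr => ?_).symm.dvd
    exact Int.modEq_iff_dvd.mpr (by simpa using hK r hr)
  exact isUnit_of_dvd_one ((dvd_sub_right (dvd_of_mul_left_dvd (hpn 1))).mp (hn_dvd.trans hone))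

theorem irreducible_ofIntPolyDiv_rootPoly (hp : p.Prime) {R : Multiset ℤ}
    (hR : (R.map (Int.cast : ℤ → ZMod p)).Nodup) (hcard : Multiset.card R = p)
    (hK : ∀ r ∈ R, ((p - 1)! : ℤ) ∣ r) :
    Irreducible (ofIntPolyDiv (rootPoly R) p (dvd_eval_rootPoly hp hR hcard)) := by
  refine irreducible_of_natDegree_eq_zero_or ?_
    (fun u v huv => natDegree_eq_zero_or_of_mul_eq hp hR (congrArg Subtype.val huv).symm)
    fun n hn => isUnit_of_intCast_dvd_ofIntPolyDiv hp hcard hK _ hn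
  rw [coe_ofIntPolyDiv, natDegree_C_mul (by simpa using hp.ne_zero),
    (rootPoly_monic R).natDegree_map, natDegree_rootPoly, hcard]
  exact hp.ne_zero

end IntValued

open IntValued in
/-- The elasticity of `Int(ℤ)` is infinite: for every real `M` there is a nonzero
nonunit `f ∈ Int(ℤ)` and lengths `m, n ∈ L(f)` with `m / n > M`. -/
theorem elasticity_infinite (M : ℝ) :
    ∃ f : IntValued, f ≠ 0 ∧ ¬IsUnit f ∧
      ∃ m n : ℕ,
        (∃ l : Multiset IntValued, Multiset.card l = m ∧ (∀ g ∈ l, Irreducible g) ∧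
          l.prod = f) ∧
        (∃ l : Multiset IntValued, Multiset.card l = n ∧ (∀ g ∈ l, Irreducible g) ∧
          l.prod = f) ∧
        (m : ℝ) / (n : ℝ) > M := by
  obtain ⟨p, hMp, hp⟩ := Nat.exists_infinite_primes (⌈2 * M⌉₊ + 1)
  set R := factorialMultiples p
  have hcard : Multiset.card R = p := card_factorialMultiples p
  have hR := nodup_map_intCast_factorialMultiples hp
  set g := ofIntPolyDiv (rootPoly R) p (dvd_eval_rootPoly hp hR hcard)
  have hg : Irreducible g := irreducible_ofIntPolyDiv_rootPoly hp hR hcard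
    fun _ => factorial_dvd_of_mem_factorialMultiples
  have hpI : Irreducible ((p : ℤ) : IntValued) :=
    irreducible_intCast (Nat.prime_iff_prime_int.mp hp).irreducible
  have hpg : ((p : ℤ) : IntValued) * g = ofIntPoly (rootPoly R) :=
    intCast_mul_ofIntPolyDiv (Nat.cast_ne_zero.mpr hp.ne_zero) _
  refine ⟨ofIntPoly (rootPoly R), hpg ▸ mul_ne_zero hpI.ne_zero hg.ne_zero,
    hpg ▸ fun h => hpI.not_isUnit (isUnit_of_mul_isUnit_left h), p, 2,
    ⟨R.map fun r => ofIntPoly (X - C r), by rw [Multiset.card_map, hcard],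
      Multiset.forall_mem_map_iff.mpr fun r _ => irreducible_ofIntPoly_X_sub_C r,
      by rw [rootPoly, map_multiset_prod, Multiset.map_map]; rfl⟩,
    ⟨{((p : ℤ) : IntValued), g}, rfl, by simp only [Multiset.insert_eq_cons,
      Multiset.forall_mem_cons, Multiset.mem_singleton, forall_eq, hpI, hg, and_self],
      by rw [Multiset.insert_eq_cons, Multiset.prod_cons, Multiset.prod_singleton, hpg]⟩, ?_⟩
  · rw [gt_iff_lt, lt_div_iff₀ two_pos]
    have := Nat.le_ceil (2 * M)
    have : (⌈2 * M⌉₊ : ℝ) + 1 ≤ p := by exact_mod_cast hMp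
    push_cast
    linarith
end

section
/- Int(ℤ) is fully elastic: for every rational number q > 1 there exists a nonzero nonunit f ∈ Int(ℤ) with elasticity ρ(f) = q. In fact, f can be chosen so that its set of lengths is a two-element set {a, b} with a < b and b / a = q. -/
/-!
Let `d = 3 ^ k` with `k` odd, and let `g, h ∈ ℤ[X]` be irreducible over `ℚ` (Eisenstein at `2`),
with `(g, h)` taking the values `(1, d)` at `1` and `(d, 1)` at `3`, and `d ∣ g(c) h(c)` for every
integer `c` (`3 ^ k ∣ g(c)` when `3 ∣ c` by the shape of `g`, `3 ^ k ∣ h(c)` otherwise by Euler's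
theorem). Then `K = g h / d ∈ Int(ℤ)`. As `g` and `h` are non-associated primes of `ℚ[X]`, a
divisor in Int(ℤ) of a word `z g^a h^b K^c` (`0 ≠ z ∈ ℤ`) is `r g^i h^j` in `ℚ[X]`, and its values
at the two points force `r d^(min i j) ∈ ℤ`, so it is again a word; a word determines `a + c`,
`b + c` and `z / d^c`. Hence the irreducible divisors of words are the words of weight
`Ω(|z|) + a + b + c = 1`, and the factorizations of `g h K^n = d K^(n+1)` have exactly the lengths
`n + 2` and `n + 1 + Ω(d) = n + 1 + k`. For `q = u / v` in lowest terms, `n = 2v - 2` and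
`k = 2(u - v) + 1` give the lengths `2v` and `2u`.
-/

open Polynomial

open ArithmeticFunction.Omega

section Lengths

variable {M : Type*} [CommMonoid M]

def lengths (f : M) : Set ℕ :=
  {n | ∃ l : Multiset M, Multiset.card l = n ∧ (∀ g ∈ l, Irreducible g) ∧ l.prod = f}

theorem add_mem_lengths_mul {x y : M} {m n : ℕ} (hx : m ∈ lengths x) (hy : n ∈ lengths y) :
    m + n ∈ lengths (x * y) := by
  obtain ⟨l, rfl, hl, rfl⟩ := hx
  obtain ⟨l', rfl, hl', rfl⟩ := hy
  exact ⟨l + l', Multiset.card_add _ _, fun g hg => (Multiset.mem_add.1 hg).elim (hl g) (hl' g),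
    Multiset.prod_add _ _⟩

theorem Irreducible.mem_lengths_pow {x : M} (hx : Irreducible x) (n : ℕ) : n ∈ lengths (x ^ n) :=
  ⟨Multiset.replicate n x, Multiset.card_replicate _ _,
    fun _ hg => Multiset.eq_of_mem_replicate hg ▸ hx, Multiset.prod_replicate _ _⟩

theorem not_isUnit_of_mem_lengths {f : M} {n : ℕ} (hf : n ∈ lengths f) (hn : n ≠ 0) :
    ¬IsUnit f := by
  obtain ⟨l, rfl, hl, rfl⟩ := hf
  obtain ⟨x, hx⟩ := Multiset.card_pos_iff_exists_mem.1 (Nat.pos_of_ne_zero hn)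
  exact fun hu => (hl x hx).not_isUnit (isUnit_of_dvd_unit (Multiset.dvd_prod hx) hu)

theorem Irreducible.eq_one_of_mem_lengths {x : M} (hx : Irreducible x) {n : ℕ}
    (hn : n ∈ lengths x) : n = 1 := by
  obtain ⟨l, rfl, hl, rfl⟩ := hn
  rcases Multiset.empty_or_exists_mem l with rfl | ⟨y, hy⟩
  · exact absurd (Multiset.prod_zero (M := M) ▸ hx) not_irreducible_one
  obtain ⟨t, rfl⟩ := Multiset.exists_cons_of_mem hy
  rw [Multiset.prod_cons] at hx
  have ht : IsUnit t.prod := (hx.isUnit_or_isUnit rfl).resolve_left (hl y hy).not_isUnit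
  have : t = 0 := Multiset.eq_zero_of_forall_notMem fun z hz =>
    (hl z (by simp [hz])).not_isUnit (isUnit_of_dvd_unit (Multiset.dvd_prod hz) ht)
  simp [this]

theorem ne_zero_of_mem_lengths {M₀ : Type*} [CommMonoidWithZero M₀] [NoZeroDivisors M₀]
    [Nontrivial M₀] {f : M₀} {n : ℕ} (hf : n ∈ lengths f) : f ≠ 0 := by
  obtain ⟨l, -, hl, rfl⟩ := hf
  exact Multiset.prod_ne_zero fun h0 => (hl 0 h0).ne_zero rfl

end Lengths

section TwoPrimes

variable {M : Type*} [CommMonoidWithZero M] [IsCancelMulZero M] {p q : M}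

theorem Prime.exists_eq_mul_pow_mul_pow_of_dvd [DecompositionMonoid M] (hp : Prime p)
    (hq : Prime q) {x : M} {m n : ℕ} (h : x ∣ p ^ m * q ^ n) :
    ∃ u : Mˣ, ∃ i j : ℕ, x = u * p ^ i * q ^ j := by
  obtain ⟨a, b, ha, hb, rfl⟩ := exists_dvd_and_dvd_of_dvd_mul h
  obtain ⟨i, -, hi⟩ := (dvd_prime_pow hp m).1 ha
  obtain ⟨j, -, hj⟩ := (dvd_prime_pow hq n).1 hb
  obtain ⟨u, rfl⟩ := hi.symm
  obtain ⟨v, rfl⟩ := hj.symm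
  exact ⟨u * v, i, j, by rw [Units.val_mul]; ac_rfl⟩

theorem Prime.eq_of_mul_pow_mul_pow_eq (hp : Prime p) (hq : Prime q) (hpq : ¬Associated p q)
    {u v : M} (hu : IsUnit u) (hv : IsUnit v) {i j k l : ℕ}
    (h : u * p ^ i * q ^ j = v * p ^ k * q ^ l) : i = k ∧ j = l ∧ u = v := by
  have hpq' : ¬p ∣ q := fun hd => hpq ((hp.dvd_prime_iff_associated hq).1 hd)
  have hqp' : ¬q ∣ p := fun hd => hpq ((hq.dvd_prime_iff_associated hp).1 hd).symm
  have key : ∀ {p q u : M}, Prime p → ¬p ∣ q → IsUnit u → ∀ i j : ℕ,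
      emultiplicity p (u * p ^ i * q ^ j) = i := by
    intro p q u hp hpq hu i j
    rw [emultiplicity_mul hp, emultiplicity_mul hp, emultiplicity_of_isUnit_right hp.not_isUnit hu,
      emultiplicity_pow_self_of_prime hp, emultiplicity_pow hp, emultiplicity_eq_zero.2 hpq]
    simp
  have hik : i = k := by exact_mod_cast (key hp hpq' hu i j).symm.trans (h ▸ key hp hpq' hv k l)
  have h' : u * q ^ j * p ^ i = v * q ^ l * p ^ k := by
    rw [mul_right_comm, h, mul_right_comm]
  have hjl : j = l := by exact_mod_cast (key hq hqp' hu j i).symm.trans (h' ▸ key hq hqp' hv l k)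
  subst hik hjl
  exact ⟨rfl, rfl, mul_right_cancel₀ (pow_ne_zero _ hp.ne_zero)
    (mul_right_cancel₀ (pow_ne_zero _ hq.ne_zero) h)⟩

end TwoPrimes

theorem Polynomial.isPrimitive_of_isUnit_eval {R : Type*} [CommSemiring R] {f : R[X]} {x : R}
    (h : IsUnit (f.eval x)) : f.IsPrimitive := fun r hr =>
  isUnit_of_dvd_unit (by simpa using eval_dvd (x := x) hr) h

theorem Polynomial.irreducible_C_mul_X_pow_add {R : Type*} [CommRing R] [IsDomain R] {p a : R}
    {q : R[X]} {n : ℕ} (hp : Prime p) (hqn : q.natDegree < n) (ha : ¬p ∣ a)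
    (hq : ∀ i, p ∣ q.coeff i) (hq0 : ¬p ^ 2 ∣ q.coeff 0)
    (hprim : (C a * X ^ n + q).IsPrimitive) : Irreducible (C a * X ^ n + q) := by
  have ha0 : a ≠ 0 := fun h => ha (h ▸ dvd_zero p)
  have hlt : q.degree < (C a * X ^ n).degree := by
    rw [degree_C_mul_X_pow n ha0]
    exact degree_le_natDegree.trans_lt (by exact_mod_cast hqn)
  have hdeg : (C a * X ^ n + q).degree = (n : WithBot ℕ) := by
    rw [degree_add_eq_left_of_degree_lt hlt, degree_C_mul_X_pow n ha0]
  have hcoeff : ∀ i < n, (C a * X ^ n + q).coeff i = q.coeff i := fun i hi => by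
    simp [hi.ne]
  have hn : 0 < n := (Nat.zero_le _).trans_lt hqn
  refine irreducible_of_eisenstein_criterion ((Ideal.span_singleton_prime hp.ne_zero).2 hp)
    ?_ ?_ ?_ ?_ hprim
  · rwa [leadingCoeff_add_of_degree_lt' hlt, leadingCoeff_C_mul_X_pow, Ideal.mem_span_singleton]
  · intro i hi
    rw [hdeg, Nat.cast_lt] at hi
    rw [hcoeff i hi, Ideal.mem_span_singleton]
    exact hq i
  · rw [hdeg]; exact_mod_cast hn
  · rwa [Ideal.span_singleton_pow, hcoeff 0 hn, Ideal.mem_span_singleton]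

theorem cardFactors_natAbs_add_mul_eq {z z' : ℤ} {d c c' : ℕ} (hd : d ≠ 0) (hz : z ≠ 0)
    (hz' : z' ≠ 0) (h : z * d ^ c' = z' * d ^ c) :
    Ω z.natAbs + c' * Ω d = Ω z'.natAbs + c * Ω d := by
  simpa [Int.natAbs_mul, Int.natAbs_pow, ArithmeticFunction.cardFactors_mul, hz, hz', hd,
    ArithmeticFunction.cardFactors_pow] using congrArg (fun x : ℤ => Ω x.natAbs) h

namespace IntValued

noncomputable def ofPoly (p : ℤ[X]) : IntValued :=
  ⟨p.map (Int.castRingHom ℚ), fun c => ⟨p.eval c, by simp⟩⟩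

@[simp]
theorem coe_ofPoly (p : ℤ[X]) : (ofPoly p : ℚ[X]) = p.map (Int.castRingHom ℚ) := rfl

end IntValued

open IntValued

structure IsElasticPair (g h : ℤ[X]) (d : ℕ) : Prop where
  one_lt : 1 < d
  irreducible_left : Irreducible (g.map (Int.castRingHom ℚ))
  irreducible_right : Irreducible (h.map (Int.castRingHom ℚ))
  dvd_eval_mul (c : ℤ) : (d : ℤ) ∣ g.eval c * h.eval c
  exists_eval_left : ∃ c : ℤ, g.eval c = d ∧ h.eval c = 1
  exists_eval_right : ∃ c : ℤ, g.eval c = 1 ∧ h.eval c = d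

namespace IsElasticPair

variable {g h : ℤ[X]} {d : ℕ} (hP : IsElasticPair g h d)
include hP

theorem ne_zero : d ≠ 0 := (zero_lt_one.trans hP.one_lt).ne'

theorem d_ne_zero : (d : ℚ) ≠ 0 := Nat.cast_ne_zero.2 hP.ne_zero

noncomputable def mulDiv : IntValued :=
  ⟨C (d : ℚ)⁻¹ * (g.map (Int.castRingHom ℚ) * h.map (Int.castRingHom ℚ)), fun c => by
    obtain ⟨m, hm⟩ := hP.dvd_eval_mul c
    refine ⟨m, ?_⟩
    have : ((g.eval c : ℤ) : ℚ) * ((h.eval c : ℤ) : ℚ) = (d : ℚ) * (m : ℚ) := by exact_mod_cast hm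
    simp [this, hP.d_ne_zero]⟩

theorem natCast_mul_mulDiv : (d : IntValued) * hP.mulDiv = ofPoly g * ofPoly h := by
  apply Subtype.ext
  simp only [mulDiv, Subring.coe_mul, Subring.coe_natCast, coe_ofPoly]
  rw [← mul_assoc, ← C_eq_natCast, ← C_mul, mul_inv_cancel₀ hP.d_ne_zero, C_1, one_mul]

noncomputable def word (z : ℤ) (a b c : ℕ) : IntValued :=
  z * ofPoly g ^ a * ofPoly h ^ b * hP.mulDiv ^ c

theorem coe_word (z : ℤ) (a b c : ℕ) :
    (hP.word z a b c : ℚ[X]) = C ((z : ℚ) / d ^ c) * (ofPoly g : ℚ[X]) ^ (a + c) *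
      (ofPoly h : ℚ[X]) ^ (b + c) := by
  simp only [word, mulDiv, Subring.coe_mul, Subring.coe_pow, Subring.coe_intCast, coe_ofPoly,
    div_eq_mul_inv, C_mul, ← inv_pow, C_pow, pow_add, mul_pow, ← C_eq_intCast]
  ring

theorem word_mul_word (z z' : ℤ) (a b c a' b' c' : ℕ) :
    hP.word z a b c * hP.word z' a' b' c' = hP.word (z * z') (a + a') (b + b') (c + c') := by
  simp only [word, Int.cast_mul, pow_add]
  ring

theorem word_natCast_zero_zero_succ (n : ℕ) : hP.word d 0 0 (n + 1) = hP.word 1 1 1 n := by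
  simp only [word, pow_zero, mul_one, Int.cast_one, one_mul, Int.cast_natCast, pow_succ',
    ← mul_assoc, hP.natCast_mul_mulDiv]

theorem prime_left : Prime (ofPoly g : ℚ[X]) := hP.irreducible_left.prime

theorem prime_right : Prime (ofPoly h : ℚ[X]) := hP.irreducible_right.prime

theorem not_associated : ¬Associated (ofPoly g : ℚ[X]) (ofPoly h) := by
  rintro ⟨u, hu⟩
  obtain ⟨s, -, hs⟩ := Polynomial.isUnit_iff.1 u.isUnit
  obtain ⟨c₁, hg₁, hh₁⟩ := hP.exists_eval_left
  obtain ⟨c₂, hg₂, hh₂⟩ := hP.exists_eval_right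
  have e₁ := congrArg (eval (c₁ : ℚ)) hu
  have e₂ := congrArg (eval (c₂ : ℚ)) hu
  simp [← hs, hg₁, hh₁, hg₂, hh₂] at e₁ e₂
  rw [e₂] at e₁
  have : d * d = 1 := by exact_mod_cast e₁
  nlinarith [hP.one_lt]

theorem exists_word_of_dvd {F : IntValued} {z : ℤ} {a b c : ℕ} (hz : z ≠ 0)
    (hF : F ∣ hP.word z a b c) : ∃ z' a' b' c', z' ≠ 0 ∧ F = hP.word z' a' b' c' := by
  have hdvd : (F : ℚ[X]) ∣ (ofPoly g : ℚ[X]) ^ (a + c) * (ofPoly h : ℚ[X]) ^ (b + c) := by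
    have := map_dvd IntValued.subtype hF
    rwa [Subring.coe_subtype, coe_word, mul_assoc,
      (isUnit_C.2 (Ne.isUnit (by simp [hz, hP.d_ne_zero]))).dvd_mul_left] at this
  obtain ⟨u, i, j, hu⟩ := hP.prime_left.exists_eq_mul_pow_mul_pow_of_dvd hP.prime_right hdvd
  obtain ⟨r, hr, hur⟩ := Polynomial.isUnit_iff.1 u.isUnit
  obtain ⟨z', hz'⟩ : ∃ z' : ℤ, (z' : ℚ) = r * d ^ min i j := by
    rcases le_total i j with hij | hij
    · obtain ⟨c₀, hg, hh⟩ := hP.exists_eval_left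
      obtain ⟨m, hm⟩ := F.2 c₀
      refine ⟨m, ?_⟩
      rw [← hm, hu, ← hur, min_eq_left hij]
      simp [hg, hh]
    · obtain ⟨c₀, hg, hh⟩ := hP.exists_eval_right
      obtain ⟨m, hm⟩ := F.2 c₀
      refine ⟨m, ?_⟩
      rw [← hm, hu, ← hur, min_eq_right hij]
      simp [hg, hh]
  refine ⟨z', i - min i j, j - min i j, min i j, ?_, Subtype.ext ?_⟩
  · rintro rfl
    simp [hr.ne_zero, hP.d_ne_zero] at hz'
  · rw [coe_word, hu, ← hur, Nat.sub_add_cancel (min_le_left _ _),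
      Nat.sub_add_cancel (min_le_right _ _), hz', mul_div_cancel_right₀ _ (by simp [hP.d_ne_zero])]

theorem eq_of_word_eq {z z' : ℤ} {a b c a' b' c' : ℕ} (hz : z ≠ 0) (hz' : z' ≠ 0)
    (h : hP.word z a b c = hP.word z' a' b' c') :
    a + c = a' + c' ∧ b + c = b' + c' ∧ z * d ^ c' = z' * d ^ c := by
  have h' := congrArg Subtype.val h
  simp only [coe_word] at h'
  obtain ⟨h1, h2, h3⟩ := hP.prime_left.eq_of_mul_pow_mul_pow_eq hP.prime_right hP.not_associated
    (isUnit_C.2 (Ne.isUnit (by simp [hz, hP.d_ne_zero])))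
    (isUnit_C.2 (Ne.isUnit (by simp [hz', hP.d_ne_zero]))) h'
  refine ⟨h1, h2, ?_⟩
  rw [C_inj, div_eq_div_iff (by simp [hP.d_ne_zero]) (by simp [hP.d_ne_zero])] at h3
  exact_mod_cast h3

theorem word_one_zero_zero_zero : hP.word 1 0 0 0 = 1 := by
  simp [word]

theorem isUnit_word_iff {z : ℤ} {a b c : ℕ} (hz : z ≠ 0) :
    IsUnit (hP.word z a b c) ↔ Ω z.natAbs + a + b + c = 0 := by
  constructor
  · intro hu
    obtain ⟨B, hB⟩ := hu.exists_right_inv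
    obtain ⟨z', a', b', c', hz', rfl⟩ := hP.exists_word_of_dvd one_ne_zero
      (Dvd.intro_left _ (hB.trans hP.word_one_zero_zero_zero.symm))
    rw [word_mul_word, ← hP.word_one_zero_zero_zero] at hB
    obtain ⟨h1, h2, h3⟩ := hP.eq_of_word_eq (mul_ne_zero hz hz') one_ne_zero hB
    have h3 : z * z' = 1 := by simpa [show c = 0 by omega, show c' = 0 by omega] using h3
    simp [Int.isUnit_iff_natAbs_eq.1 (IsUnit.of_mul_eq_one _ h3)]
    omega
  · intro hw
    have hz1 : z.natAbs = 1 := by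
      have := ArithmeticFunction.cardFactors_eq_zero_iff_eq_zero_or_one.1
        (show Ω z.natAbs = 0 by omega)
      simpa [hz] using this
    simp only [word, show a = 0 by omega, show b = 0 by omega, show c = 0 by omega, pow_zero,
      mul_one]
    exact (Int.isUnit_iff_natAbs_eq.2 hz1).map (Int.castRingHom IntValued)

theorem irreducible_word {z : ℤ} {a b c : ℕ} (hz : z ≠ 0) (hw : Ω z.natAbs + a + b + c = 1) :
    Irreducible (hP.word z a b c) := by
  refine ⟨fun hu => by simp [(hP.isUnit_word_iff hz).1 hu] at hw, fun A B hAB => ?_⟩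
  obtain ⟨z₁, a₁, b₁, c₁, hz₁, rfl⟩ := hP.exists_word_of_dvd hz (Dvd.intro _ hAB.symm)
  obtain ⟨z₂, a₂, b₂, c₂, hz₂, rfl⟩ := hP.exists_word_of_dvd hz (Dvd.intro_left _ hAB.symm)
  rw [word_mul_word] at hAB
  obtain ⟨h1, h2, h3⟩ := hP.eq_of_word_eq hz (mul_ne_zero hz₁ hz₂) hAB
  have hΩ := cardFactors_natAbs_add_mul_eq hP.ne_zero hz (mul_ne_zero hz₁ hz₂) h3
  rw [Int.natAbs_mul, ArithmeticFunction.cardFactors_mul (by simpa using hz₁)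
    (by simpa using hz₂)] at hΩ
  have hD := ArithmeticFunction.cardFactors_pos_iff_one_lt.2 hP.one_lt
  rw [hP.isUnit_word_iff hz₁, hP.isUnit_word_iff hz₂]
  have hc : c₁ + c₂ = c := by
    by_contra hne
    have : (c₁ + c₂) * Ω d + Ω d ≤ c * Ω d := by
      rw [← add_one_mul]; exact Nat.mul_le_mul_right _ (by omega)
    omega
  rw [hc] at hΩ
  omega

theorem mem_lengths_word {z : ℕ} (hz : z ≠ 0) (a b c : ℕ) :
    Ω z + a + b + c ∈ lengths (hP.word z a b c) := by
  have hatom : ∀ {z : ℤ} {a b c : ℕ}, z ≠ 0 → Ω z.natAbs + a + b + c = 1 →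
      Irreducible (z * ofPoly g ^ a * ofPoly h ^ b * hP.mulDiv ^ c) :=
    fun hz hw => hP.irreducible_word hz hw
  have hprimes : Ω z ∈ lengths (z : IntValued) := by
    refine ⟨(z.primeFactorsList.map (fun p : ℕ => (p : IntValued)) : Multiset IntValued),
      by simp [ArithmeticFunction.cardFactors_apply], ?_, ?_⟩
    · simp only [Multiset.mem_coe, List.mem_map]
      rintro _ ⟨p, hp, rfl⟩
      have hp := Nat.prime_of_mem_primeFactorsList hp
      simpa using hatom (z := p) (a := 0) (b := 0) (c := 0) (by exact_mod_cast hp.ne_zero)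
        (by simp [ArithmeticFunction.cardFactors_apply_prime hp])
    · rw [Multiset.prod_coe, ← Nat.cast_list_prod, Nat.prod_primeFactorsList hz]
  have hG : Irreducible (ofPoly g) := by simpa using hatom (z := 1) (a := 1) (b := 0) (c := 0)
  have hH : Irreducible (ofPoly h) := by simpa using hatom (z := 1) (a := 0) (b := 1) (c := 0)
  have hK : Irreducible hP.mulDiv := by simpa using hatom (z := 1) (a := 0) (b := 0) (c := 1)
  have := add_mem_lengths_mul (add_mem_lengths_mul (add_mem_lengths_mul hprimes
    (hG.mem_lengths_pow a)) (hH.mem_lengths_pow b)) (hK.mem_lengths_pow c)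
  simpa [word] using this

theorem weight_eq_one_of_irreducible {z : ℤ} {a b c : ℕ} (hz : z ≠ 0)
    (hirr : Irreducible (hP.word z a b c)) : Ω z.natAbs + a + b + c = 1 := by
  have habs : Irreducible (hP.word z.natAbs a b c) := by
    rcases Int.natAbs_eq z with h | h
    · rwa [← h]
    · rw [h, show hP.word (-z.natAbs) a b c = -hP.word z.natAbs a b c by simp [word]] at hirr
      rwa [← neg_one_mul, irreducible_isUnit_mul isUnit_one.neg] at hirr
  exact habs.eq_one_of_mem_lengths
    (by simpa using hP.mem_lengths_word (Int.natAbs_ne_zero.2 hz) a b c)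

def HasWeight (x : IntValued) (n : ℕ) : Prop :=
  ∃ z a b c, z ≠ 0 ∧ x = hP.word z a b c ∧ Ω z.natAbs + a + b + c = n

omit hP in
theorem HasWeight.mul {hP : IsElasticPair g h d} {x y : IntValued} {m n : ℕ}
    (hx : hP.HasWeight x m) (hy : hP.HasWeight y n) : hP.HasWeight (x * y) (m + n) := by
  obtain ⟨z, a, b, c, hz, rfl, rfl⟩ := hx
  obtain ⟨z', a', b', c', hz', rfl, rfl⟩ := hy
  refine ⟨z * z', a + a', b + b', c + c', mul_ne_zero hz hz', hP.word_mul_word .., ?_⟩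
  rw [Int.natAbs_mul, ArithmeticFunction.cardFactors_mul (by simpa using hz) (by simpa using hz')]
  ring

theorem hasWeight_prod (l : Multiset IntValued) (hl : ∀ x ∈ l, hP.HasWeight x 1) :
    hP.HasWeight l.prod (Multiset.card l) := by
  induction l using Multiset.induction_on with
  | empty => exact ⟨1, 0, 0, 0, one_ne_zero, hP.word_one_zero_zero_zero.symm, by simp⟩
  | cons x l ih =>
    rw [Multiset.prod_cons, Multiset.card_cons, add_comm]
    exact (hl x (by simp)).mul (ih fun y hy => hl y (by simp [hy]))

theorem hasWeight_of_mem_lengths {z : ℤ} {a b c n : ℕ} (hz : z ≠ 0)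
    (hn : n ∈ lengths (hP.word z a b c)) : hP.HasWeight (hP.word z a b c) n := by
  obtain ⟨l, rfl, hl, hprod⟩ := hn
  rw [← hprod]
  refine hP.hasWeight_prod l fun x hx => ?_
  obtain ⟨z', a', b', c', hz', rfl⟩ := hP.exists_word_of_dvd hz (hprod ▸ Multiset.dvd_prod hx)
  exact ⟨z', a', b', c', hz', rfl, hP.weight_eq_one_of_irreducible hz' (hl _ hx)⟩

theorem lengths_word_one_one_one (n : ℕ) :
    lengths (hP.word 1 1 1 n) = {n + 2, n + 1 + Ω d} := by
  ext m
  simp only [Set.mem_insert_iff, Set.mem_singleton_iff]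
  constructor
  · intro hm
    obtain ⟨z, a, b, c, hz, hw, rfl⟩ := hP.hasWeight_of_mem_lengths one_ne_zero hm
    obtain ⟨h1, h2, h3⟩ := hP.eq_of_word_eq one_ne_zero hz hw
    have hΩ := cardFactors_natAbs_add_mul_eq hP.ne_zero one_ne_zero hz h3
    have hD := ArithmeticFunction.cardFactors_pos_iff_one_lt.2 hP.one_lt
    simp only [Int.natAbs_one, ArithmeticFunction.cardFactors_one, zero_add] at hΩ
    rcases (show c ≤ n ∨ c = n + 1 by omega) with hc | rfl
    · have : c = n := by nlinarith
      subst this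
      omega
    · rw [add_mul, one_mul] at hΩ
      omega
  · rintro (rfl | rfl)
    · simpa [add_comm] using hP.mem_lengths_word one_ne_zero 1 1 n
    · rw [← hP.word_natCast_zero_zero_succ]
      simpa [add_comm, add_left_comm, add_assoc] using
        hP.mem_lengths_word hP.ne_zero 0 0 (n + 1)

end IsElasticPair

theorem exists_three_pow_two_mul_add_one (n : ℕ) : ∃ m : ℤ, (3 : ℤ) ^ (2 * n + 1) = 8 * m + 3 := by
  obtain ⟨m, hm⟩ := (Int.ModEq.pow n (show (9 : ℤ) ≡ 1 [ZMOD 8] by decide)).symm.dvd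
  refine ⟨3 * m, ?_⟩
  rw [one_pow] at hm
  rw [pow_succ, pow_mul]
  linear_combination 3 * hm

theorem three_pow_succ_dvd_pow_sub_one {c : ℤ} (hc : ¬(3 : ℤ) ∣ c) (k : ℕ) :
    (3 : ℤ) ^ (k + 1) ∣ c ^ (2 * 3 ^ k) - 1 := by
  have h3 : ((3 : ℕ) : ℤ) ∣ c ^ 2 - 1 := by
    have : ∀ x : ZMod 3, x ≠ 0 → x ^ 2 - 1 = 0 := by decide
    have hc' : ¬((3 : ℕ) : ℤ) ∣ c := by exact_mod_cast hc
    rw [← ZMod.intCast_zmod_eq_zero_iff_dvd] at hc' ⊢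
    push_cast
    exact this _ hc'
  simpa [pow_mul] using dvd_sub_pow_of_dvd_sub h3 k

noncomputable def gPoly (w : ℕ) : ℤ[X] :=
  C (1 + 8 * 3 ^ (2 * w + 1)) * X ^ (2 * w + 3) +
    (C (-((3 ^ (2 * w + 3) - 1) * 3 ^ (2 * w + 1))) * X ^ 2 +
      C ((3 ^ (2 * w + 1) - 1) * 3 ^ (2 * w + 3)))

theorem gPoly_eval_one (w : ℕ) : (gPoly w).eval 1 = 1 := by
  simp [gPoly]; ring

theorem gPoly_eval_three (w : ℕ) : (gPoly w).eval 3 = 3 ^ (2 * w + 3) := by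
  simp [gPoly]; ring

theorem three_pow_dvd_gPoly_eval {w : ℕ} {c : ℤ} (hc : 3 ∣ c) :
    3 ^ (2 * w + 3) ∣ (gPoly w).eval c := by
  obtain ⟨c, rfl⟩ := hc
  exact ⟨(1 + 8 * 3 ^ (2 * w + 1)) * c ^ (2 * w + 3) - (3 ^ (2 * w + 3) - 1) * c ^ 2 +
    (3 ^ (2 * w + 1) - 1), by simp [gPoly]; ring⟩

theorem irreducible_map_gPoly (w : ℕ) : Irreducible ((gPoly w).map (Int.castRingHom ℚ)) := by
  obtain ⟨m, hm⟩ := exists_three_pow_two_mul_add_one w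
  have h9 : (3 : ℤ) ^ (2 * w + 3) = 9 * 3 ^ (2 * w + 1) := by ring
  have hβ : (2 : ℤ) ∣ -((3 ^ (2 * w + 3) - 1) * 3 ^ (2 * w + 1)) :=
    dvd_neg.2 (Dvd.dvd.mul_right (by omega) _)
  have hγ : (2 : ℤ) ∣ (3 ^ (2 * w + 1) - 1) * 3 ^ (2 * w + 3) := Dvd.dvd.mul_right (by omega) _
  have hγ4 : (3 ^ (2 * w + 1) - 1) * 3 ^ (2 * w + 3) = 4 * (144 * m ^ 2 + 90 * m + 13) + (2 : ℤ) :=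
    by rw [h9, hm]; ring
  have hprim : (gPoly w).IsPrimitive :=
    isPrimitive_of_isUnit_eval (x := 1) (by rw [gPoly_eval_one]; exact isUnit_one)
  refine (IsPrimitive.Int.irreducible_iff_irreducible_map_cast hprim).1 ?_
  refine irreducible_C_mul_X_pow_add Int.prime_two ?_ ?_ (fun i => ?_) ?_ hprim
  · exact (show _ ≤ 2 by compute_degree).trans_lt (by omega)
  · omega
  · simp only [coeff_add, coeff_C_mul_X_pow, coeff_C]
    split_ifs <;> omega
  · simp only [coeff_add, coeff_C_mul_X_pow, coeff_C_zero]
    omega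

/-- With `k = 2w + 3` and `M = 2 * 3 ^ (k - 1)`, this is `e = (3 ^ (M - k) - 1) / 2`: it makes
`3 ^ k (2e + 1) = 3 ^ M`, i.e. `h(3) = 1`, and as `M - k` is odd, `e ≡ 1 [ZMOD 4]`, which
Eisenstein at `2` needs. -/
noncomputable def hPolyConst (w : ℕ) : ℤ :=
  (3 ^ (2 * 3 ^ (2 * w + 2) - (2 * w + 3)) - 1) / 2

noncomputable def hPoly (w : ℕ) : ℤ[X] :=
  (X ^ (2 * 3 ^ (2 * w + 2)) - 1) * (C 3 * X - C 10) +
    C (3 ^ (2 * w + 3)) * (C (hPolyConst w) * (X - 1) + 1)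

theorem exists_hPolyConst_eq (w : ℕ) : ∃ m : ℤ, hPolyConst w = 4 * m + 1 ∧
    (3 : ℤ) ^ (2 * w + 3) * (2 * (4 * m + 1) + 1) = 3 ^ (2 * 3 ^ (2 * w + 2)) := by
  have hlt := Nat.lt_pow_self (n := 2 * w + 2) (show 1 < 3 by norm_num)
  have hexp : 2 * 3 ^ (2 * w + 2) = 2 * w + 3 + (2 * (3 ^ (2 * w + 2) - w - 2) + 1) := by omega
  obtain ⟨m, hm⟩ := exists_three_pow_two_mul_add_one (3 ^ (2 * w + 2) - w - 2)
  refine ⟨m, ?_, ?_⟩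
  · rw [hPolyConst, hexp, Nat.add_sub_cancel_left, hm]; omega
  · rw [hexp, pow_add _ (2 * w + 3), hm]; ring

theorem hPoly_eval_one (w : ℕ) : (hPoly w).eval 1 = 3 ^ (2 * w + 3) := by
  simp [hPoly]

theorem hPoly_eval_three (w : ℕ) : (hPoly w).eval 3 = 1 := by
  obtain ⟨m, hm, hM⟩ := exists_hPolyConst_eq w
  simp only [hPoly, eval_add, eval_mul, eval_sub, eval_pow, eval_X, eval_C, eval_one, hm]
  linear_combination hM

theorem three_pow_dvd_hPoly_eval {w : ℕ} {c : ℤ} (hc : ¬3 ∣ c) :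
    3 ^ (2 * w + 3) ∣ (hPoly w).eval c := by
  have := three_pow_succ_dvd_pow_sub_one hc (2 * w + 2)
  simp only [hPoly, eval_add, eval_mul, eval_sub, eval_pow, eval_X, eval_C, eval_one]
  exact dvd_add (this.mul_right _) (dvd_mul_right _ _)

theorem irreducible_map_hPoly (w : ℕ) : Irreducible ((hPoly w).map (Int.castRingHom ℚ)) := by
  obtain ⟨m, hm, -⟩ := exists_hPolyConst_eq w
  have hM : 0 < 3 ^ (2 * w + 2) := by positivity
  obtain ⟨m', hm'⟩ := exists_three_pow_two_mul_add_one (w + 1)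
  have hk : (3 : ℤ) ^ (2 * w + 3) = 8 * m' + 3 := by rw [← hm']; ring
  have hprim : (hPoly w).IsPrimitive :=
    isPrimitive_of_isUnit_eval (x := 3) (by rw [hPoly_eval_three]; exact isUnit_one)
  have hexp : hPoly w = C 3 * X ^ (2 * 3 ^ (2 * w + 2) + 1) + (C (-10) * X ^ (2 * 3 ^ (2 * w + 2))
      + C (3 ^ (2 * w + 3) * (4 * m + 1) - 3) * X ^ 1 + C (-(4 * m * 3 ^ (2 * w + 3)) + 10)) := by
    rw [hPoly, hm]; simp only [map_add, map_sub, map_mul, map_neg, map_one, map_pow]; ring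
  have hd0 : -(4 * m * 3 ^ (2 * w + 3)) + 10 = 4 * (2 - m * 3 ^ (2 * w + 3)) + (2 : ℤ) := by ring
  have hd1 : (2 : ℤ) ∣ 3 ^ (2 * w + 3) * (4 * m + 1) - 3 :=
    ⟨16 * m * m' + 4 * m' + 6 * m, by rw [hk]; ring⟩
  refine (IsPrimitive.Int.irreducible_iff_irreducible_map_cast hprim).1 ?_
  rw [hexp]
  refine irreducible_C_mul_X_pow_add Int.prime_two ?_ (by decide) (fun i => ?_) ?_ (hexp ▸ hprim)
  · exact (show _ ≤ 2 * 3 ^ (2 * w + 2) by compute_degree!; omega).trans_lt (by omega)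
  · simp only [coeff_add, coeff_C_mul_X_pow, coeff_C]
    split_ifs <;> omega
  · simp only [coeff_add, coeff_C_mul_X_pow, coeff_C_zero]
    rw [if_neg (by omega), if_neg (by omega), zero_add, zero_add, hd0]
    omega

theorem isElasticPair_gPoly_hPoly (w : ℕ) :
    IsElasticPair (gPoly w) (hPoly w) (3 ^ (2 * w + 3)) where
  one_lt := Nat.one_lt_pow (by omega) (by norm_num)
  irreducible_left := irreducible_map_gPoly w
  irreducible_right := irreducible_map_hPoly w
  dvd_eval_mul c := by
    push_cast
    by_cases hc : 3 ∣ c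
    · exact (three_pow_dvd_gPoly_eval hc).mul_right _
    · exact (three_pow_dvd_hPoly_eval hc).mul_left _
  exists_eval_left := ⟨3, by push_cast; exact gPoly_eval_three w, hPoly_eval_three w⟩
  exists_eval_right := ⟨1, gPoly_eval_one w, by push_cast; exact hPoly_eval_one w⟩

/-- `Int(ℤ)` is fully elastic: every rational `q > 1` is the elasticity of some
nonzero nonunit `f`; in fact `f` can be chosen with set of lengths `{a, b}`,
`a < b`, `b / a = q`. -/
theorem fully_elastic (q : ℚ) (hq : 1 < q) :
    ∃ f : IntValued, f ≠ 0 ∧ ¬IsUnit f ∧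
      ∃ a b : ℕ, a < b ∧ (b : ℚ) / (a : ℚ) = q ∧
        ∀ n : ℕ,
          (∃ l : Multiset IntValued, Multiset.card l = n ∧ (∀ g ∈ l, Irreducible g) ∧
              l.prod = f)
            ↔ (n = a ∨ n = b) := by
  have hv : 0 < q.den := q.pos
  have hden : (0 : ℚ) < q.den := by exact_mod_cast hv
  have hnum : (q.den : ℤ) < q.num := by
    have : (q.den : ℚ) < q.num := (one_lt_div hden).1 (by rwa [Rat.num_div_den])
    exact_mod_cast this
  obtain ⟨w, hw⟩ : ∃ w : ℕ, q.num = q.den + w + 1 := ⟨(q.num - q.den - 1).toNat, by omega⟩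
  have hP := isElasticPair_gPoly_hPoly w
  have hL := hP.lengths_word_one_one_one (2 * q.den - 2)
  rw [ArithmeticFunction.cardFactors_apply_prime_pow Nat.prime_three] at hL
  have hmem : 2 * q.den ∈ lengths (hP.word 1 1 1 (2 * q.den - 2)) := by
    rw [hL]; left; omega
  refine ⟨_, ne_zero_of_mem_lengths hmem, not_isUnit_of_mem_lengths hmem (by omega),
    2 * q.den, 2 * (q.den + w + 1), by omega, ?_, fun n => ?_⟩
  · have hq' := Rat.num_div_den q
    rw [hw] at hq'
    conv_rhs => rw [← hq']
    push_cast
    field_simp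
  · change n ∈ lengths _ ↔ _
    rw [hL]
    simp only [Set.mem_insert_iff, Set.mem_singleton_iff]
    omega
end

section
/- Given finitely many non-constant monic polynomials fᵢ ∈ ℤ[X] indexed by a finite set I, there exist monic polynomials Fᵢ ∈ ℤ[X] for i ∈ I, each irreducible in ℤ[X], pairwise non-associated in ℚ[X], with deg Fᵢ = deg fᵢ, and with the following property: for every subset J ⊆ I, setting gᵢ = Fᵢ for i ∈ J and gᵢ = fᵢ for i ∈ I∖J, the fixed divisor of ∏_{i∈K} gᵢ equals the fixed divisor of ∏_{i∈K} fᵢ for every subset K ⊆ I. -/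
open Polynomial

/-- The fixed divisor `d(f)` of `f ∈ ℤ[X]`: the nonnegative generator of the
ideal of ℤ generated by the image `f(ℤ)`. -/
noncomputable def fixedDivisor (f : Polynomial ℤ) : ℕ :=
  (@Submodule.IsPrincipal.generator ℤ ℤ _ _ _
    (Ideal.span (Set.range fun c : ℤ => f.eval c))
    (IsPrincipalIdealRing.principal _)).natAbs

lemma fd_span (f : Polynomial ℤ) :
    Ideal.span (Set.range fun c : ℤ => f.eval c)
      = Ideal.span {(fixedDivisor f : ℤ)} := by
  rw [fixedDivisor, Int.span_natAbs]
  exact (Ideal.span_singleton_generator _).symm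

lemma fd_dvd_eval (f : Polynomial ℤ) (c : ℤ) :
    (fixedDivisor f : ℤ) ∣ f.eval c := by
  rw [← Ideal.mem_span_singleton, ← fd_span]
  exact Ideal.subset_span ⟨c, rfl⟩

lemma dvd_fd {f : Polynomial ℤ} {k : ℤ} (h : ∀ c : ℤ, k ∣ f.eval c) :
    k ∣ (fixedDivisor f : ℤ) := by
  rw [← Ideal.mem_span_singleton]
  have hle : Ideal.span (Set.range fun c : ℤ => f.eval c) ≤ Ideal.span {k} := by
    rw [Ideal.span_le]
    rintro x ⟨c, rfl⟩
    exact Ideal.mem_span_singleton.mpr (h c)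
  refine hle ?_
  rw [fd_span]
  exact Ideal.mem_span_singleton_self _

/-- forward difference operator on integer polynomials -/
noncomputable def polyDelta (q : Polynomial ℤ) : Polynomial ℤ := taylor 1 q - q

lemma coeff_taylor_one (q : Polynomial ℤ) (m : ℕ) (h : q.natDegree ≤ m + 1) :
    (taylor 1 q).coeff m = q.coeff m + (m + 1) * q.coeff (m + 1) := by
  rw [taylor_coeff]
  have hd : (hasseDeriv m q).natDegree < 2 := by
    have := natDegree_hasseDeriv_le q m
    omega
  rw [eval_eq_sum_range' hd]
  simp [Finset.sum_range_succ, hasseDeriv_coeff, Nat.choose_self,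
    Nat.choose_succ_self_right, add_comm 1 m]

lemma polyDelta_coeff (q : Polynomial ℤ) (m : ℕ) (h : q.natDegree ≤ m + 1) :
    (polyDelta q).coeff m = (m + 1) * q.coeff (m + 1) := by
  rw [polyDelta, coeff_sub, coeff_taylor_one q m h]; ring

lemma polyDelta_natDegree (q : Polynomial ℤ) (m : ℕ) (h : q.natDegree ≤ m + 1) :
    (polyDelta q).natDegree ≤ m := by
  rw [natDegree_le_iff_coeff_eq_zero]
  intro N hN
  rw [polyDelta, coeff_sub, sub_eq_zero]
  rcases eq_or_lt_of_le (Nat.succ_le_of_lt hN) with hNm | hNm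
  · subst hNm
    rw [coeff_taylor_one q (m + 1) (by omega),
      coeff_eq_zero_of_natDegree_lt (show q.natDegree < m + 1 + 1 by omega), mul_zero, add_zero]
  · have h1 : q.natDegree < N := lt_of_le_of_lt h hNm
    rw [coeff_eq_zero_of_natDegree_lt h1,
      coeff_eq_zero_of_natDegree_lt (by rwa [natDegree_taylor])]

lemma polyDelta_iter (m : ℕ) :
    ∀ q : Polynomial ℤ, q.natDegree ≤ m →
      polyDelta^[m] q = C ((m.factorial : ℤ) * q.coeff m) := by
  induction m with
  | zero =>
      intro q hq
      simpa using (eq_C_of_natDegree_le_zero hq)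
  | succ m ih =>
      intro q hq
      rw [Function.iterate_succ_apply, ih _ (polyDelta_natDegree q m hq),
        polyDelta_coeff q m hq]
      congr 1
      push_cast [Nat.factorial_succ]
      ring

lemma polyDelta_iter_eval_mem (f : Polynomial ℤ) (m : ℕ) (c : ℤ) :
    (polyDelta^[m] f).eval c ∈ Ideal.span (Set.range fun c : ℤ => f.eval c) := by
  induction m generalizing c with
  | zero => exact Ideal.subset_span ⟨c, rfl⟩
  | succ m ih =>
      rw [Function.iterate_succ_apply', polyDelta, eval_sub, taylor_eval]
      exact sub_mem (ih (c + 1)) (ih c)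

lemma fd_dvd_factorial {f : Polynomial ℤ} (hf : f.Monic) :
    (fixedDivisor f : ℤ) ∣ (f.natDegree.factorial : ℤ) := by
  have h := polyDelta_iter_eval_mem f f.natDegree 0
  rw [polyDelta_iter f.natDegree f le_rfl, hf.coeff_natDegree, mul_one, eval_C,
    fd_span, Ideal.mem_span_singleton] at h
  exact h

lemma int_crt (a b m n : ℤ) (h : IsCoprime m n) :
    ∃ x : ℤ, m ∣ x - a ∧ n ∣ x - b := by
  obtain ⟨u, v, huv⟩ := h
  exact ⟨a * v * n + b * u * m, ⟨(b - a) * u, by linear_combination a * huv⟩,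
    ⟨(a - b) * v, by linear_combination b * huv⟩⟩

/-- Lemma 6: given non-constant monic `fᵢ ∈ ℤ[X]`, there are monic irreducible
`Fᵢ ∈ ℤ[X]` of the same degrees, pairwise non-associated in ℚ[X], such that
replacing any subset of the `fᵢ` by the corresponding `Fᵢ` does not change the
fixed divisor of any subproduct. -/
theorem irreducible_replacements_preserving_fixed_divisors
    {ι : Type*} [DecidableEq ι] (I : Finset ι) (f : ι → Polynomial ℤ)
    (hmonic : ∀ i ∈ I, (f i).Monic) (hnc : ∀ i ∈ I, 0 < (f i).natDegree) :
    ∃ F : ι → Polynomial ℤ,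
      (∀ i ∈ I, (F i).Monic) ∧
      (∀ i ∈ I, Irreducible (F i)) ∧
      (∀ i ∈ I, (F i).natDegree = (f i).natDegree) ∧
      (∀ i ∈ I, ∀ j ∈ I, i ≠ j →
        ¬Associated ((F i).map (Int.castRingHom ℚ)) ((F j).map (Int.castRingHom ℚ))) ∧
      (∀ J ⊆ I, ∀ K ⊆ I,
        fixedDivisor (∏ i ∈ K, if i ∈ J then F i else f i)
          = fixedDivisor (∏ i ∈ K, f i)) := by
  classical
  set n : ι → ℕ := fun i => (f i).natDegree with hn
  set D : ℕ := ∑ i ∈ I, n i with hD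
  set M : ℤ := (D.factorial : ℤ) with hM
  have hMpos : 0 < D.factorial := D.factorial_pos
  set idx : ι → ℕ := fun i => if h : i ∈ I then ((I.equivFin ⟨i, h⟩ : Fin I.card) : ℕ) else 0
    with hidx
  have hsm : StrictMono (Nat.nth Nat.Prime) := Nat.nth_strictMono Nat.infinite_setOf_prime
  set p : ι → ℕ := fun i => Nat.nth Nat.Prime (D.factorial + 1 + idx i) with hp
  have hpprime : ∀ i, (p i).Prime := fun i => Nat.nth_mem_of_infinite Nat.infinite_setOf_prime _
  have hpbig : ∀ i, D.factorial < p i := by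
    intro i
    calc D.factorial < D.factorial + 1 + idx i := by omega
    _ ≤ p i := hsm.le_apply
  have hpne : ∀ i ∈ I, ∀ j ∈ I, i ≠ j → p i ≠ p j := by
    intro i hi j hj hij hcon
    rw [hp] at hcon
    have h0 := hsm.injective hcon
    have h1 : idx i = idx j := by omega
    rw [hidx] at h1
    simp only [dif_pos hi, dif_pos hj] at h1
    have h2 : I.equivFin ⟨i, hi⟩ = I.equivFin ⟨j, hj⟩ := Fin.ext h1
    exact hij (congrArg Subtype.val (I.equivFin.injective h2))
  set Q : ι → ℤ := fun i => ∏ j ∈ I.erase i, (p j : ℤ) with hQ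
  have hcop1 : ∀ i ∈ I, IsCoprime ((p i : ℤ) ^ 2) (Q i) := by
    intro i hi
    apply IsCoprime.pow_left
    rw [hQ]
    apply IsCoprime.prod_right
    intro j hj
    have hij : i ≠ j := fun h => (Finset.notMem_erase i I (h ▸ hj)).elim
    rw [Int.isCoprime_iff_gcd_eq_one, Int.gcd_natCast_natCast]
    exact (Nat.coprime_primes (hpprime i) (hpprime j)).mpr
      (hpne i hi j (Finset.mem_of_mem_erase hj) hij)
  have hcopMp : ∀ i : ι, IsCoprime M ((p i : ℤ)) := by
    intro i
    rw [hM, Int.isCoprime_iff_gcd_eq_one, Int.gcd_natCast_natCast]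
    exact (((hpprime i).coprime_iff_not_dvd).mpr
      (fun hdvd => absurd (Nat.le_of_dvd hMpos hdvd) (not_le.mpr (hpbig i)))).symm
  have hcopM : ∀ i ∈ I, IsCoprime M ((p i : ℤ) ^ 2 * Q i) := by
    intro i hi
    apply IsCoprime.mul_right
    · exact (hcopMp i).pow_right
    · rw [hQ]
      exact IsCoprime.prod_right fun j _ => hcopMp j
  -- choose coefficients by CRT
  have hex : ∀ (i : ι) (k : ℕ), ∃ x : ℤ, i ∈ I →
      (M ∣ x - (f i).coeff k ∧
       (p i : ℤ) ^ 2 ∣ x - (if k = 0 then (p i : ℤ) else 0) ∧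
       Q i ∣ x - 1) := by
    intro i k
    by_cases hi : i ∈ I
    · obtain ⟨y, hy1, hy2⟩ := int_crt (if k = 0 then (p i : ℤ) else 0) 1 _ _ (hcop1 i hi)
      obtain ⟨x, hx1, hx2⟩ := int_crt ((f i).coeff k) y _ _ (hcopM i hi)
      refine ⟨x, fun _ => ⟨hx1, ?_, ?_⟩⟩
      · have h1 : (p i : ℤ) ^ 2 ∣ x - y := dvd_trans (dvd_mul_right _ _) hx2
        simpa [sub_add_sub_cancel] using dvd_add h1 hy1
      · have h1 : Q i ∣ x - y := dvd_trans (dvd_mul_left _ _) hx2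
        simpa [sub_add_sub_cancel] using dvd_add h1 hy2
    · exact ⟨0, fun h => absurd h hi⟩
  choose c hc using hex
  set F : ι → Polynomial ℤ :=
    fun i => X ^ n i + ∑ k ∈ Finset.range (n i), C (c i k) * X ^ k with hF
  have hdeglt : ∀ i, (∑ k ∈ Finset.range (n i), C (c i k) * X ^ k).degree < ((n i : ℕ) : WithBot ℕ) := by
    intro i
    apply lt_of_le_of_lt (degree_sum_le _ _)
    rw [Finset.sup_lt_iff (WithBot.bot_lt_coe _)]
    intro k hk
    exact lt_of_le_of_lt (degree_C_mul_X_pow_le _ _)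
      (by exact_mod_cast Finset.mem_range.mp hk)
  have hFmonic : ∀ i, (F i).Monic := fun i => monic_X_pow_add (hdeglt i)
  have hFdeg : ∀ i, (F i).natDegree = n i := by
    intro i
    apply natDegree_eq_of_degree_eq_some
    simp only [hF]
    rw [degree_add_eq_left_of_degree_lt (by rw [degree_X_pow]; exact hdeglt i), degree_X_pow]
  have hFcoeff : ∀ i k, k < n i → (F i).coeff k = c i k := by
    intro i k hk
    simp only [hF, coeff_add, finset_sum_coeff, coeff_C_mul, coeff_X_pow,
      if_neg (show ¬ k = n i by omega), mul_ite, mul_one, mul_zero, zero_add]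
    rw [Finset.sum_ite_eq (Finset.range (n i)) k fun j => c i j]
    simp [Finset.mem_range.mpr hk]
  have hcong : ∀ i ∈ I, C M ∣ F i - f i := by
    intro i hi
    rw [C_dvd_iff_dvd_coeff]
    intro k
    rw [coeff_sub]
    rcases lt_trichotomy k (n i) with hk | hk | hk
    · rw [hFcoeff i k hk]
      exact ((hc i k) hi).1
    · have e1 : (F i).coeff (n i) = 1 := by
        rw [← hFdeg i]; exact (hFmonic i).coeff_natDegree
      have e2 : (f i).coeff (n i) = 1 := (hmonic i hi).coeff_natDegree
      rw [hk, e1, e2]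
      simp
    · rw [coeff_eq_zero_of_natDegree_lt (by rw [hFdeg i]; exact hk),
        coeff_eq_zero_of_natDegree_lt hk]
      simp
  have hevalcong : ∀ i ∈ I, ∀ t : ℤ, M ∣ (F i).eval t - (f i).eval t := by
    intro i hi t
    obtain ⟨r, hr⟩ := hcong i hi
    have h1 : (F i).eval t - (f i).eval t = (F i - f i).eval t := by simp
    rw [h1, hr, eval_mul, eval_C]
    exact Dvd.intro _ rfl
  have hpc : ∀ i ∈ I, ∀ k, k < n i → (p i : ℤ) ∣ (F i).coeff k := by
    intro i hi k hk
    rw [hFcoeff i k hk]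
    have h2 := ((hc i k) hi).2.1
    have h3 : (p i : ℤ) ∣ c i k - (if k = 0 then (p i : ℤ) else 0) :=
      dvd_trans (dvd_pow_self _ two_ne_zero) h2
    have h4 : (p i : ℤ) ∣ (if k = 0 then (p i : ℤ) else 0) := by split <;> simp
    simpa [sub_add_cancel] using dvd_add h3 h4
  have hppInt : ∀ i, Prime ((p i : ℤ)) := fun i => Nat.prime_iff_prime_int.mp (hpprime i)
  have hFirr : ∀ i ∈ I, Irreducible (F i) := by
    intro i hi
    have hni : 0 < n i := hnc i hi
    refine irreducible_of_eisenstein_criterion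
      ((Ideal.span_singleton_prime (by exact_mod_cast (hpprime i).ne_zero)).mpr (hppInt i))
      ?_ ?_ ?_ ?_ ((hFmonic i).isPrimitive)
    · rw [(hFmonic i).leadingCoeff, Ideal.mem_span_singleton]
      exact fun h => (hppInt i).not_unit (isUnit_of_dvd_one h)
    · intro k hk
      rw [Ideal.mem_span_singleton]
      rw [degree_eq_natDegree (hFmonic i).ne_zero, hFdeg i] at hk
      exact hpc i hi k (by exact_mod_cast hk)
    · rw [degree_eq_natDegree (hFmonic i).ne_zero, hFdeg i]
      exact_mod_cast hni
    · rw [Ideal.span_singleton_pow, Ideal.mem_span_singleton]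
      intro hdvd
      rw [hFcoeff i 0 hni] at hdvd
      have h2 := ((hc i 0) hi).2.1
      rw [if_pos rfl] at h2
      have hps : (p i : ℤ) ^ 2 ∣ (p i : ℤ) := by
        simpa using dvd_sub hdvd h2
      obtain ⟨t, ht⟩ := hps
      have hne : (p i : ℤ) ≠ 0 := by exact_mod_cast (hpprime i).ne_zero
      have : (1 : ℤ) = (p i : ℤ) * t :=
        mul_left_cancel₀ hne (by linear_combination ht)
      exact (hppInt i).not_unit (isUnit_of_dvd_one ⟨t, this⟩)
  have hFne : ∀ i ∈ I, ∀ j ∈ I, i ≠ j → F i ≠ F j := by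
    intro i hi j hj hij heq
    have hci : (p i : ℤ) ∣ (F i).coeff 0 := hpc i hi 0 (hnc i hi)
    have hcj : Q j ∣ c j 0 - 1 := ((hc j 0) hj).2.2
    have hpiQ : (p i : ℤ) ∣ Q j := by
      rw [hQ]
      exact Finset.dvd_prod_of_mem _ (Finset.mem_erase.mpr ⟨hij, hi⟩)
    have h1 : (p i : ℤ) ∣ (F j).coeff 0 - 1 := by
      rw [hFcoeff j 0 (hnc j hj)]
      exact dvd_trans hpiQ hcj
    rw [heq] at hci
    have hone : (p i : ℤ) ∣ 1 := by
      simpa using dvd_sub hci h1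
    exact (hppInt i).not_unit (isUnit_of_dvd_one hone)
  have key : ∀ g h : Polynomial ℤ, g.Monic → h.Monic → g.natDegree ≤ D → h.natDegree ≤ D →
      (∀ t : ℤ, M ∣ g.eval t - h.eval t) → fixedDivisor g = fixedDivisor h := by
    intro g h hg hh hgD hhD hco
    have hMg : (fixedDivisor g : ℤ) ∣ M :=
      (fd_dvd_factorial hg).trans (Int.natCast_dvd_natCast.mpr (Nat.factorial_dvd_factorial hgD))
    have hMh : (fixedDivisor h : ℤ) ∣ M :=
      (fd_dvd_factorial hh).trans (Int.natCast_dvd_natCast.mpr (Nat.factorial_dvd_factorial hhD))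
    have h1 : (fixedDivisor g : ℤ) ∣ (fixedDivisor h : ℤ) := by
      apply dvd_fd
      intro t
      have he : h.eval t = g.eval t - (g.eval t - h.eval t) := by ring
      rw [he]
      exact dvd_sub (fd_dvd_eval g t) (hMg.trans (hco t))
    have h2 : (fixedDivisor h : ℤ) ∣ (fixedDivisor g : ℤ) := by
      apply dvd_fd
      intro t
      have he : g.eval t = h.eval t + (g.eval t - h.eval t) := by ring
      rw [he]
      exact dvd_add (fd_dvd_eval h t) (hMh.trans (hco t))
    exact Nat.dvd_antisymm (by exact_mod_cast h1) (by exact_mod_cast h2)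
  refine ⟨F, fun i _ => hFmonic i, hFirr, fun i _ => hFdeg i, ?_, ?_⟩
  · intro i hi j hj hij hass
    have heq := eq_of_monic_of_associated ((hFmonic i).map (Int.castRingHom ℚ))
      ((hFmonic j).map (Int.castRingHom ℚ)) hass
    exact hFne i hi j hj hij
      (Polynomial.map_injective _ Int.cast_injective heq)
  · intro J hJ K hK
    have hfacm : ∀ i ∈ K, (if i ∈ J then F i else f i).Monic := by
      intro i hi
      split
      · exact hFmonic i
      · exact hmonic i (hK hi)
    apply key
    · exact monic_prod_of_monic _ _ hfacm
    · exact monic_prod_of_monic _ _ fun i hi => hmonic i (hK hi)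
    · rw [natDegree_prod_of_monic _ _ hfacm]
      have hre : ∀ i ∈ K, (if i ∈ J then F i else f i).natDegree = n i := by
        intro i hi
        split
        · exact hFdeg i
        · rfl
      rw [Finset.sum_congr rfl hre, hD]
      exact Finset.sum_le_sum_of_subset hK
    · rw [natDegree_prod_of_monic _ _ fun i hi => hmonic i (hK hi), hD]
      exact Finset.sum_le_sum_of_subset hK
    · intro t
      rw [eval_prod, eval_prod, hM, ← ZMod.intCast_zmod_eq_zero_iff_dvd]
      have hfac : ∀ i ∈ K,
          (((if i ∈ J then F i else f i).eval t : ℤ) : ZMod D.factorial)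
            = (((f i).eval t : ℤ) : ZMod D.factorial) := by
        intro i hi
        split
        · next hiJ =>
            have hd := hevalcong i (hK hi) t
            rw [hM, ← ZMod.intCast_zmod_eq_zero_iff_dvd, Int.cast_sub, sub_eq_zero] at hd
            exact hd
        · rfl
      rw [Int.cast_sub, Int.cast_prod, Int.cast_prod, Finset.prod_congr rfl hfac, sub_self]
end

section
/- Let g ∈ ℤ[X] be primitive, and let a ∈ ℤ, b ∈ ℕ with b ≥ 1 and gcd(a, b) = 1. Then the polynomial f = (a/b) · g ∈ ℚ[X] maps ℤ into ℤ (i.e., f ∈ Int(ℤ)) if and only if b divides the fixed divisor d(g). -/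
open Polynomial

theorem dvd_generator_span_iff {R : Type*} [CommRing R] {S : Set R}
    [(Ideal.span S).IsPrincipal] {b : R} :
    b ∣ Submodule.IsPrincipal.generator (Ideal.span S) ↔ ∀ s ∈ S, b ∣ s := by
  rw [← Ideal.span_singleton_le_span_singleton, Ideal.span_singleton_generator, Ideal.span_le]
  simp only [Set.subset_def, SetLike.mem_coe, Ideal.mem_span_singleton]

theorem dvd_fixedDivisor_iff (g : ℤ[X]) (b : ℕ) :
    b ∣ fixedDivisor g ↔ ∀ c : ℤ, (b : ℤ) ∣ g.eval c := by
  rw [fixedDivisor, ← Int.natCast_dvd_natCast, Int.dvd_natAbs, dvd_generator_span_iff,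
    Set.forall_mem_range]

theorem exists_intCast_eq_div_mul_iff_dvd {a b : ℤ} (hb : b ≠ 0) (hab : IsCoprime a b) (n : ℤ) :
    (∃ m : ℤ, (a / b : ℚ) * n = m) ↔ b ∣ n := by
  have hbq : (b : ℚ) ≠ 0 := Int.cast_ne_zero.mpr hb
  constructor
  · rintro ⟨m, hm⟩
    have hmul : a * n = b * m := by
      rw [div_mul_eq_mul_div, div_eq_iff hbq] at hm
      exact_mod_cast hm.trans (mul_comm _ _)
    exact hab.symm.dvd_of_dvd_mul_left ⟨m, hmul⟩
  · rintro ⟨k, rfl⟩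
    exact ⟨a * k, by push_cast; field_simp⟩

theorem intValued_iff_dvd_fixedDivisor_general (g : Polynomial ℤ)
    (a : ℤ) (b : ℕ) (hb : 1 ≤ b) (hab : Int.gcd a b = 1) :
    (Polynomial.C ((a : ℚ) / (b : ℚ)) * g.map (Int.castRingHom ℚ)) ∈ IntValued
      ↔ b ∣ fixedDivisor g := by
  have hb0 : (b : ℤ) ≠ 0 := by omega
  have hcop : IsCoprime a b := Int.isCoprime_iff_gcd_eq_one.mpr hab
  rw [dvd_fixedDivisor_iff]
  refine forall_congr' fun c => ?_
  rw [eval_mul, eval_C, eval_intCast_map, eq_intCast, ← Int.cast_natCast b]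
  exact exists_intCast_eq_div_mul_iff_dvd hb0 hcop _

/-- Remark 1 (ii): for primitive `g ∈ ℤ[X]` and coprime `a ∈ ℤ`, `b ∈ ℕ`, `b ≥ 1`,
the polynomial `(a/b)·g` is integer-valued iff `b` divides the fixed divisor `d(g)`. -/
theorem intValued_iff_dvd_fixedDivisor (g : Polynomial ℤ) (hg : g.IsPrimitive)
    (a : ℤ) (b : ℕ) (hb : 1 ≤ b) (hab : Int.gcd a b = 1) :
    (Polynomial.C ((a : ℚ) / (b : ℚ)) * g.map (Int.castRingHom ℚ)) ∈ IntValued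
      ↔ b ∣ fixedDivisor g :=
  intValued_iff_dvd_fixedDivisor_general g a b hb hab
end

section
/- Int(ℤ) is atomic: every nonzero nonunit element of Int(ℤ) can be written as a finite product of irreducible elements of Int(ℤ). -/
/-!
Let `μ(f)` be the least nonzero value of `|f(n)|` for `n ∈ ℤ`. If `f = g * h` with `h` a nonzero
nonunit, then evaluating at a point where `|f(n)| = μ(f)` gives `μ(g) ≤ μ(f)`. Either `deg h > 0`,
so the degree drops, or `h` is an integer constant `c` with `|c| ≥ 2`, so `μ(g) ≤ μ(f) / 2`.
Hence `deg + μ` strictly decreases along proper divisors, `Int(ℤ)` satisfies the ascending chain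
condition on principal ideals, and factorizations into irreducibles exist.
-/

open Polynomial

theorem WfDvdMonoid.of_lt_of_dvdNotUnit {α : Type*} [CommMonoidWithZero α] (size : α → ℕ)
    (lt : ∀ a b, b ≠ 0 → DvdNotUnit a b → size a < size b) : WfDvdMonoid α where
  wf := by
    classical
    refine RelHomClass.wellFounded
      (⟨fun a => if a = 0 then (⊤ : WithTop ℕ) else size a, ?_⟩ : DvdNotUnit →r (· < ·))
      wellFounded_lt
    intro a b hab
    by_cases hb : b = 0
    · simp [hb, hab.1]
    · simpa [hb, hab.1] using lt a b hb hab

namespace IntValued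

noncomputable def value (f : IntValued) (n : ℤ) : ℤ := (f.2 n).choose

@[simp]
theorem cast_value (f : IntValued) (n : ℤ) : (value f n : ℚ) = (f : ℚ[X]).eval (n : ℚ) :=
  (f.2 n).choose_spec.symm

noncomputable def evalAt (n : ℤ) : IntValued →+* ℤ where
  toFun f := value f n
  map_one' := Int.cast_injective (α := ℚ) (by simp)
  map_mul' f g := Int.cast_injective (α := ℚ) (by simp)
  map_zero' := Int.cast_injective (α := ℚ) (by simp)
  map_add' f g := Int.cast_injective (α := ℚ) (by simp)

@[simp]
theorem cast_evalAt (n : ℤ) (f : IntValued) : (evalAt n f : ℚ) = (f : ℚ[X]).eval (n : ℚ) :=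
  cast_value f n

theorem exists_evalAt_ne_zero {f : IntValued} (hf : f ≠ 0) : ∃ n, evalAt n f ≠ 0 := by
  by_contra! hroot
  refine hf (Subtype.ext (eq_zero_of_infinite_isRoot _ ?_))
  refine (Set.infinite_range_of_injective (Int.cast_injective (α := ℚ))).mono ?_
  rintro _ ⟨n, rfl⟩
  simpa using congrArg (Int.cast : ℤ → ℚ) (hroot n)

theorem eq_intCast_evalAt_of_natDegree_eq_zero {f : IntValued}
    (hd : (f : ℚ[X]).natDegree = 0) (n : ℤ) : f = (evalAt n f : IntValued) := by
  apply Subtype.ext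
  rw [Subring.coe_intCast, ← C_eq_intCast, cast_evalAt, eq_C_of_natDegree_eq_zero hd]
  simp

theorem two_le_natAbs_evalAt_of_natDegree_eq_zero {h : IntValued}
    (hd : (h : ℚ[X]).natDegree = 0) (h0 : h ≠ 0) (hu : ¬IsUnit h) (n : ℤ) :
    2 ≤ (evalAt n h).natAbs := by
  have hconst := eq_intCast_evalAt_of_natDegree_eq_zero hd n
  have hne_zero : (evalAt n h).natAbs ≠ 0 := by
    rw [Int.natAbs_ne_zero]
    rintro hzero
    exact h0 (by rw [hconst, hzero, Int.cast_zero])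
  have hne_one : (evalAt n h).natAbs ≠ 1 := by
    intro hunit
    rw [← Int.isUnit_iff_natAbs_eq] at hunit
    exact hu (hconst ▸ hunit.map (Int.castRingHom IntValued))
  omega

noncomputable def minAbsValue (f : IntValued) : ℕ :=
  sInf {k | 0 < k ∧ ∃ n, (evalAt n f).natAbs = k}

theorem minAbsValue_le {f : IntValued} {n : ℤ} (hn : evalAt n f ≠ 0) :
    minAbsValue f ≤ (evalAt n f).natAbs :=
  Nat.sInf_le ⟨Int.natAbs_pos.2 hn, n, rfl⟩

theorem exists_natAbs_evalAt_eq_minAbsValue {f : IntValued} (hf : f ≠ 0) :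
    ∃ n, evalAt n f ≠ 0 ∧ (evalAt n f).natAbs = minAbsValue f := by
  obtain ⟨m, hm⟩ := exists_evalAt_ne_zero hf
  obtain ⟨hpos, n, hn⟩ := Nat.sInf_mem (s := {k | 0 < k ∧ ∃ n, (evalAt n f).natAbs = k})
    ⟨_, Int.natAbs_pos.2 hm, m, rfl⟩
  exact ⟨n, Int.natAbs_pos.1 (hn ▸ hpos), hn⟩

theorem natDegree_add_minAbsValue_lt_mul {g h : IntValued} (hg : g ≠ 0) (h0 : h ≠ 0)
    (hu : ¬IsUnit h) :
    (g : ℚ[X]).natDegree + minAbsValue g <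
      ((g * h : IntValued) : ℚ[X]).natDegree + minAbsValue (g * h) := by
  obtain ⟨n, hn, hmin⟩ := exists_natAbs_evalAt_eq_minAbsValue (mul_ne_zero hg h0)
  rw [map_mul] at hn hmin
  rw [Int.natAbs_mul] at hmin
  have hg_le : minAbsValue g ≤ (evalAt n g).natAbs := minAbsValue_le (left_ne_zero_of_mul hn)
  have hdeg : ((g * h : IntValued) : ℚ[X]).natDegree =
      (g : ℚ[X]).natDegree + (h : ℚ[X]).natDegree :=
    natDegree_mul (by exact_mod_cast hg) (by exact_mod_cast h0)
  rcases Nat.eq_zero_or_pos (h : ℚ[X]).natDegree with hd | hd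
  · have h2 := two_le_natAbs_evalAt_of_natDegree_eq_zero hd h0 hu n
    have hg_pos := Int.natAbs_pos.2 (left_ne_zero_of_mul hn)
    nlinarith
  · have h1 := Int.natAbs_pos.2 (right_ne_zero_of_mul hn)
    nlinarith

instance : WfDvdMonoid IntValued :=
  WfDvdMonoid.of_lt_of_dvdNotUnit (fun f => (f : ℚ[X]).natDegree + minAbsValue f)
    fun a b hb ⟨ha, c, hc, hbac⟩ => by
      subst hbac
      exact natDegree_add_minAbsValue_lt_mul ha (right_ne_zero_of_mul hb) hc

end IntValued

/-- Remark 2 (iii): `Int(ℤ)` is atomic: every nonzero nonunit is a finite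
product of irreducible elements. -/
theorem intValued_atomic (f : IntValued) (hf0 : f ≠ 0) (hfu : ¬IsUnit f) :
    ∃ l : Multiset IntValued, (∀ g ∈ l, Irreducible g) ∧ l.prod = f := by
  obtain ⟨l, hl, hprod, -⟩ := (WfDvdMonoid.not_isUnit_iff_exists_factors_eq f hf0).1 hfu
  exact ⟨l, hl, hprod⟩
end

section
/- Every nonzero nonunit f ∈ Int(ℤ) has only finitely many essentially different factorizations into irreducibles in Int(ℤ): the set of multisets of associate classes of irreducible elements of Int(ℤ) whose product is the associate class of f is finite. -/
/-!
Fix `n ∈ ℤ` with `f(n) ≠ 0`. A divisor `g` of `f` in `Int(ℤ)` is determined by its associate class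
in `ℚ[X]`, which divides that of `f` in the UFD `ℚ[X]` and fixes `g` up to a rational constant,
together with the integer `g(n)`, a nonzero divisor of `f(n)`; so `f` has finitely many divisors.
A factorization of `f` into `k` nonunits gives a strictly increasing chain of `k + 1` divisors of
`f`, which bounds `k`, and its factors are among the finitely many divisors.
-/

open Polynomial

theorem Multiset.finite_setOfPred_forall_mem_and_card_le {α : Type*} {D : Set α}
    (hD : D.Finite) (n : ℕ) : {s : Multiset α | (∀ a ∈ s, a ∈ D) ∧ card s ≤ n}.Finite := by
  classical
  refine (n • hD.toFinset.val).powerset.finite_toSet.subset ?_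
  rintro s ⟨hsD, hsn⟩
  rw [Set.mem_ofPred_eq, Multiset.mem_powerset, Multiset.le_iff_count]
  intro a
  by_cases ha : a ∈ s
  · rw [Multiset.count_nsmul, Multiset.count_eq_one_of_mem hD.toFinset.nodup
      (hD.mem_toFinset.mpr (hsD a ha)), mul_one]
    exact (Multiset.count_le_card a s).trans hsn
  · simp [Multiset.count_eq_zero_of_notMem ha]

theorem UniqueFactorizationMonoid.finite_setOfPred_dvd {M : Type*} [CommMonoidWithZero M]
    [UniqueFactorizationMonoid M] [Fintype Mˣ] {y : M} (hy : y ≠ 0) : {x | x ∣ y}.Finite :=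
  Set.finite_coe_iff.mp (@Finite.of_fintype _ (fintypeSubtypeDvd y hy))

theorem Associates.finite_setOfPred_dvd_mk {M : Type*} [CommMonoid M] {f : M}
    (hf : {g | g ∣ f}.Finite) : {d | d ∣ Associates.mk f}.Finite := by
  refine (hf.image Associates.mk).subset fun d hd => ?_
  obtain ⟨g, rfl⟩ := Associates.mk_surjective d
  exact ⟨g, Associates.mk_dvd_mk.mp hd, rfl⟩

section Factorizations

variable {α : Type*} [CommMonoidWithZero α] [IsCancelMulZero α]

theorem Multiset.card_lt_ncard_setOfPred_dvd_prod (s : Multiset α) (hs : ∀ a ∈ s, ¬IsUnit a)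
    (h0 : s.prod ≠ 0) (hfin : {d | d ∣ s.prod}.Finite) :
    card s < {d | d ∣ s.prod}.ncard := by
  induction s using Multiset.induction_on with
  | empty => simpa using (Set.ncard_pos hfin).mpr ⟨1, one_dvd _⟩
  | cons a t ih =>
    rw [Multiset.prod_cons] at h0 hfin ⊢
    have ht0 : t.prod ≠ 0 := right_ne_zero_of_mul h0
    have hlt : t.prod ∣ a * t.prod ∧ ¬a * t.prod ∣ t.prod :=
      dvd_and_not_dvd_iff.mpr ⟨ht0, a, hs a (Multiset.mem_cons_self a t), mul_comm _ _⟩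
    have hssub : {d | d ∣ t.prod} ⊂ {d | d ∣ a * t.prod} :=
      (Set.ssubset_iff_of_subset fun _ hd => hd.trans hlt.1).mpr ⟨a * t.prod, dvd_rfl, hlt.2⟩
    have ht := ih (fun b hb => hs b (Multiset.mem_cons_of_mem hb)) ht0 (hfin.subset hssub.subset)
    have := Set.ncard_lt_ncard hssub hfin
    rw [Multiset.card_cons]
    omega

theorem finite_setOfPred_factorizations_of_finite_dvd {f : α} (hf : f ≠ 0)
    (hD : {d | d ∣ f}.Finite) :
    {s : Multiset α | (∀ a ∈ s, Irreducible a) ∧ s.prod = f}.Finite := by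
  refine (Multiset.finite_setOfPred_forall_mem_and_card_le hD {d | d ∣ f}.ncard).subset ?_
  rintro s ⟨hirr, rfl⟩
  exact ⟨fun a ha => Multiset.dvd_prod ha,
    (s.card_lt_ncard_setOfPred_dvd_prod (fun a ha => (hirr a ha).not_isUnit) hf hD).le⟩

end Factorizations

theorem Polynomial.exists_eval_intCast_ne_zero {R : Type*} [CommRing R] [IsDomain R] [CharZero R]
    {p : R[X]} (hp : p ≠ 0) : ∃ n : ℤ, p.eval (n : R) ≠ 0 := by
  by_contra! h
  refine hp (p.eq_zero_of_infinite_isRoot ((Set.infinite_range_of_injective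
    Int.cast_injective).mono ?_))
  rintro _ ⟨n, rfl⟩
  exact h n

theorem Polynomial.eq_of_associated_of_eval_eq {R : Type*} [CommRing R] [IsDomain R]
    {p q : R[X]} (h : Associated p q) {x : R} (hx0 : p.eval x ≠ 0) (hx : p.eval x = q.eval x) :
    p = q := by
  obtain ⟨u, rfl⟩ := h
  obtain ⟨c, -, hc⟩ := Polynomial.isUnit_iff.mp u.isUnit
  rw [← hc, eval_mul, eval_C] at hx
  have hc1 : c = 1 := (mul_eq_left₀ hx0).mp hx.symm
  rw [← hc, hc1, C_1, mul_one]

namespace IntValued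

noncomputable def evalInt (n : ℤ) : IntValued →+* ℤ :=
  have cast_spec (g : IntValued) : ((g.2 n).choose : ℚ) = (g : ℚ[X]).eval (n : ℚ) :=
    (g.2 n).choose_spec.symm
  { toFun := fun g => (g.2 n).choose
    map_one' := Int.cast_injective (α := ℚ) <| by rw [cast_spec]; simp
    map_mul' := fun g h => Int.cast_injective (α := ℚ) <| by
      rw [Int.cast_mul, cast_spec, cast_spec, cast_spec]; simp
    map_zero' := Int.cast_injective (α := ℚ) <| by rw [cast_spec]; simp
    map_add' := fun g h => Int.cast_injective (α := ℚ) <| by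
      rw [Int.cast_add, cast_spec, cast_spec, cast_spec]; simp }

@[simp]
theorem cast_evalInt (n : ℤ) (g : IntValued) : (evalInt n g : ℚ) = (g : ℚ[X]).eval (n : ℚ) :=
  (g.2 n).choose_spec.symm

theorem finite_setOfPred_dvd {f : IntValued} (hf : f ≠ 0) : {g | g ∣ f}.Finite := by
  have hf' : (f : ℚ[X]) ≠ 0 := by exact_mod_cast hf
  obtain ⟨n, hn⟩ := exists_eval_intCast_ne_zero hf'
  have hfn : evalInt n f ≠ 0 := by exact_mod_cast (cast_evalInt n f).symm ▸ hn
  have hdvd_coe {g : IntValued} (hg : g ∣ f) : (g : ℚ[X]) ∣ f := map_dvd IntValued.subtype hg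
  have hmaps : Set.MapsTo (fun g : IntValued => (Associates.mk (g : ℚ[X]), evalInt n g))
      {g | g ∣ f} ({a | a ∣ Associates.mk (f : ℚ[X])} ×ˢ {k | k ∣ evalInt n f}) :=
    fun g hg => ⟨Associates.mk_dvd_mk.mpr (hdvd_coe hg), map_dvd (evalInt n) hg⟩
  refine Set.Finite.of_injOn hmaps ?_
    ((UniqueFactorizationMonoid.finite_setOfPred_dvd (Associates.mk_ne_zero.mpr hf')).prod
      (UniqueFactorizationMonoid.finite_setOfPred_dvd hfn))
  intro g₁ hg₁ g₂ _ h
  simp only [Prod.mk.injEq, Associates.mk_eq_mk_iff_associated] at h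
  have heval : (g₁ : ℚ[X]).eval (n : ℚ) = (g₂ : ℚ[X]).eval (n : ℚ) := by
    rw [← cast_evalInt, ← cast_evalInt, h.2]
  have hg₁n : (g₁ : ℚ[X]).eval (n : ℚ) ≠ 0 := fun h0 =>
    hn (eval_eq_zero_of_dvd_of_eval_eq_zero (hdvd_coe hg₁) h0)
  exact Subtype.ext (eq_of_associated_of_eval_eq h.1 hg₁n heval)

end IntValued

theorem finitely_many_factorizations_general (f : IntValued) (hf0 : f ≠ 0) :
    {s : Multiset (Associates IntValued) |
      (∀ a ∈ s, Irreducible a) ∧ s.prod = Associates.mk f}.Finite :=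
  finite_setOfPred_factorizations_of_finite_dvd (Associates.mk_ne_zero.mpr hf0)
    (Associates.finite_setOfPred_dvd_mk (IntValued.finite_setOfPred_dvd hf0))

/-- Remark 2 (iv): every nonzero nonunit of `Int(ℤ)` has only finitely many
essentially different factorizations into irreducibles. -/
theorem finitely_many_factorizations (f : IntValued) (hf0 : f ≠ 0) (hfu : ¬IsUnit f) :
    {s : Multiset (Associates IntValued) |
      (∀ a ∈ s, Irreducible a) ∧ s.prod = Associates.mk f}.Finite :=
  finitely_many_factorizations_general f hf0
end

section
/- Let f ∈ ℤ[X] be primitive with deg f = n, and let p be a prime. Then the p-adic valuation of the fixed divisor of f satisfies v_p(d(f)) ≤ Σ_{k≥1} ⌊n/p^k⌋ = v_p(n!). In particular, if p divides d(f) then p ≤ n. -/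
open Polynomial

private lemma delta_descPochhammer (k : ℕ) :
    (descPochhammer ℤ (k+1)).comp (X + 1) - descPochhammer ℤ (k+1)
      = C ((k : ℤ) + 1) * descPochhammer ℤ k := by
  have h1 : (descPochhammer ℤ (k+1)).comp (X + 1) = (X + 1) * descPochhammer ℤ k := by
    rw [descPochhammer_succ_left, mul_comp, X_comp, comp_assoc, sub_comp, X_comp, one_comp,
      add_sub_cancel_right, comp_X]
  rw [h1, descPochhammer_succ_right]
  simp only [map_add, map_one, C_eq_natCast]
  ring

private lemma exists_desc_repr : ∀ (n : ℕ) (f : Polynomial ℤ), f.natDegree ≤ n →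
    ∃ c : ℕ → ℤ, f = ∑ k ∈ Finset.range (n+1), C (c k) * descPochhammer ℤ k := by
  intro n
  induction n with
  | zero =>
    intro f hfd
    refine ⟨fun _ => f.coeff 0, ?_⟩
    rw [Finset.sum_range_one, descPochhammer_zero, mul_one]
    exact Polynomial.eq_C_of_natDegree_le_zero hfd
  | succ n ih =>
    intro f hfd
    set g : Polynomial ℤ := f - C (f.coeff (n+1)) * descPochhammer ℤ (n+1) with hg
    have hgd : g.natDegree ≤ n := by
      rw [natDegree_le_iff_coeff_eq_zero]
      intro N hN
      rcases eq_or_lt_of_le (Nat.succ_le_of_lt hN) with h | h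
      · have hmon := (monic_descPochhammer ℤ (n+1)).coeff_natDegree
        rw [descPochhammer_natDegree] at hmon
        rw [hg, coeff_sub, coeff_C_mul, ← h, hmon, mul_one, sub_self]
      · have h1 : f.coeff N = 0 := coeff_eq_zero_of_natDegree_lt (lt_of_le_of_lt hfd h)
        have h2 : (descPochhammer ℤ (n+1)).coeff N = 0 := by
          apply coeff_eq_zero_of_natDegree_lt
          rw [descPochhammer_natDegree]; exact h
        simp [hg, h1, h2]
    obtain ⟨c, hc⟩ := ih g hgd
    refine ⟨fun k => if k = n+1 then f.coeff (n+1) else c k, ?_⟩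
    rw [Finset.sum_range_succ]
    have : ∑ k ∈ Finset.range (n+1),
        C (if k = n+1 then f.coeff (n+1) else c k) * descPochhammer ℤ k
        = ∑ k ∈ Finset.range (n+1), C (c k) * descPochhammer ℤ k := by
      apply Finset.sum_congr rfl
      intro k hk
      have hk' := Finset.mem_range.mp hk
      rw [if_neg (by omega)]
    rw [this, ← hc]
    simp only []
    simp only [if_true]
    rw [hg]
    ring

private lemma desc_diff_eval (k : ℕ) (x : ℤ) :
    (descPochhammer ℤ (k+1)).eval (x+1) - (descPochhammer ℤ (k+1)).eval x
      = ((k : ℤ)+1) * (descPochhammer ℤ k).eval x := by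
  have h := congrArg (eval x) (delta_descPochhammer k)
  simpa [eval_comp] using h

private lemma dvd_factorial_mul_coeff : ∀ (n : ℕ) (c : ℕ → ℤ) (m : ℤ),
    (∀ x : ℤ, m ∣ (∑ k ∈ Finset.range (n+1), C (c k) * descPochhammer ℤ k).eval x) →
    ∀ j, j ≤ n → m ∣ (j.factorial : ℤ) * c j := by
  intro n
  induction n with
  | zero =>
    intro c m h j hj
    interval_cases j
    have h0 := h 0
    rw [eval_finset_sum] at h0
    simpa using h0
  | succ n ih =>
    intro c m h j hj
    rcases j with _ | j
    · have h0 := h 0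
      rw [eval_finset_sum] at h0
      simp only [eval_mul, eval_C, descPochhammer_eval_zero, mul_ite, mul_one, mul_zero,
        Finset.sum_ite_eq, Finset.sum_ite_eq', Finset.mem_range] at h0
      simpa using h0
    · have key : ∀ x : ℤ, m ∣ (∑ k ∈ Finset.range (n+1),
          C (((k:ℤ)+1) * c (k+1)) * descPochhammer ℤ k).eval x := by
        intro x
        have hd : m ∣ ∑ k ∈ Finset.range (n+2),
            (c k * (descPochhammer ℤ k).eval (x+1) - c k * (descPochhammer ℤ k).eval x) := by
          have := dvd_sub (h (x+1)) (h x)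
          simpa [eval_finset_sum, ← Finset.sum_sub_distrib] using this
        rw [Finset.sum_range_succ'] at hd
        simp only [descPochhammer_zero, eval_one, mul_one, sub_self, add_zero] at hd
        rw [eval_finset_sum]
        simp only [eval_mul, eval_C]
        have heq : ∑ k ∈ Finset.range (n+1),
            (((k:ℤ)+1) * c (k+1)) * (descPochhammer ℤ k).eval x
            = ∑ k ∈ Finset.range (n+1),
            (c (k+1) * (descPochhammer ℤ (k+1)).eval (x+1)
              - c (k+1) * (descPochhammer ℤ (k+1)).eval x) := by
          apply Finset.sum_congr rfl
          intro k _
          rw [← mul_sub, desc_diff_eval]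
          ring
        rw [heq]
        exact hd
      have hres := ih (fun k => ((k:ℤ)+1) * c (k+1)) m key j (Nat.lt_succ_iff.mp hj)
      rw [Nat.factorial_succ]
      push_cast
      convert hres using 1
      push_cast
      ring

private lemma fd_dvd_factorial_s18 (f : Polynomial ℤ) (hf : f.IsPrimitive) (n : ℕ)
    (hdeg : f.natDegree = n) (m : ℤ) (hm : ∀ x : ℤ, m ∣ f.eval x) :
    m ∣ (n.factorial : ℤ) := by
  obtain ⟨c, hc⟩ := exists_desc_repr n f (le_of_eq hdeg)
  have hck : ∀ k, k ≤ n → m ∣ (n.factorial : ℤ) * c k := by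
    intro k hk
    have h1 := dvd_factorial_mul_coeff n c m (by rw [← hc]; exact hm) k hk
    obtain ⟨t, ht⟩ := Nat.factorial_dvd_factorial hk
    have : (n.factorial : ℤ) * c k = ((k.factorial : ℤ) * c k) * t := by
      rw [ht]; push_cast; ring
    rw [this]
    exact h1.mul_right t
  have hC : C m ∣ C (n.factorial : ℤ) * f := by
    rw [hc, Finset.mul_sum]
    apply Finset.dvd_sum
    intro k hk
    have h2 : C m ∣ C ((n.factorial : ℤ) * c k) :=
      map_dvd C (hck k (Nat.lt_succ_iff.mp (Finset.mem_range.mp hk)))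
    rw [map_mul] at h2
    exact h2.trans ⟨descPochhammer ℤ k, by ring⟩
  have hcont := dvd_content_iff_C_dvd.mpr hC
  rw [content_C_mul, hf.content_eq_one, mul_one,
    Int.normalize_of_nonneg (by positivity)] at hcont
  exact hcont

/-- Remark 3 (iii): for primitive `f ∈ ℤ[X]` of degree `n` and a prime `p`,
`v_p(d(f)) ≤ Σ_{k≥1} ⌊n/p^k⌋ = v_p(n!)`; in particular `p ∣ d(f)` implies `p ≤ n`. -/
theorem fixedDivisor_padic_bound (f : Polynomial ℤ) (hf : f.IsPrimitive)
    (n : ℕ) (hdeg : f.natDegree = n) (p : ℕ) (hp : p.Prime) :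
    padicValNat p (fixedDivisor f) ≤ ∑ k ∈ Finset.Icc 1 n, n / p ^ k ∧
    (∑ k ∈ Finset.Icc 1 n, n / p ^ k) = padicValNat p n.factorial ∧
    (p ∣ fixedDivisor f → p ≤ n) := by
  haveI : Fact p.Prime := ⟨hp⟩
  set d := fixedDivisor f with hd
  have hgen : ∀ x : ℤ, (d : ℤ) ∣ f.eval x := by
    intro x
    have hmem : f.eval x ∈ Ideal.span (Set.range fun c : ℤ => f.eval c) :=
      Ideal.subset_span ⟨x, rfl⟩
    haveI inst : (Ideal.span (Set.range fun c : ℤ => f.eval c)).IsPrincipal :=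
      IsPrincipalIdealRing.principal _
    have hgd := (Submodule.IsPrincipal.mem_iff_generator_dvd _).mp hmem
    exact (Int.natAbs_dvd).mpr hgd
  have hdvd : (d : ℤ) ∣ (n.factorial : ℤ) := fd_dvd_factorial_s18 f hf n hdeg _ hgen
  have hdvdn : d ∣ n.factorial := Int.ofNat_dvd.mp (by exact_mod_cast hdvd)
  have hfac : Nat.log p n < n + 1 := Nat.lt_succ_of_le (Nat.log_le_self p n)
  have hsum : (∑ k ∈ Finset.Icc 1 n, n / p ^ k) = padicValNat p n.factorial := by
    rw [padicValNat_factorial hfac, Finset.Ico_add_one_right_eq_Icc]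
  have hd0 : d ≠ 0 := by
    intro h0
    rw [h0] at hdvdn
    exact Nat.factorial_ne_zero n (Nat.eq_zero_of_zero_dvd hdvdn)
  have hle : padicValNat p d ≤ padicValNat p n.factorial := by
    obtain ⟨t, ht⟩ := hdvdn
    have ht0 : t ≠ 0 := by
      rintro rfl
      rw [mul_zero] at ht
      exact Nat.factorial_ne_zero n ht
    rw [ht, padicValNat.mul hd0 ht0]
    exact Nat.le_add_right _ _
  exact ⟨hsum ▸ hle, hsum, fun hpd => (Nat.Prime.dvd_factorial hp).mp (hpd.trans hdvdn)⟩
end
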